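/- arXiv:2311.08194 — 9 statements merged into one kernel-verified Lean document; each statement's English description precedes it below -/
import Mathlib

section
/- Let G be a finite simple graph and k ≥ 1. If G admits a rank-1 quantum k-colouring, then G admits a k-dimensional orthogonal representation. In particular ξ(G) ≤ χ_q^{(1)}(G). -/
open scoped ComplexConjugate

/-- The standard (conjugate-linear in the first argument) inner product on `ι → ℂ`. -/
noncomputable def cdot {ι : Type} [Fintype ι] (x y : ι → ℂ) : ℂ :=
  ∑ i, conj (x i) * y i

/-- A `k`-dimensional (complex) orthogonal representation of a graph. -/
def IsOrthRep {V : Type} (G : SimpleGraph V) (k : ℕ) (ψ : V → Fin k → ℂ) : Prop :=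
  (∀ v, cdot (ψ v) (ψ v) = 1) ∧ ∀ u v, G.Adj u v → cdot (ψ u) (ψ v) = 0

/-- The orthogonal rank `ξ(G)`: the least `k ≥ 1` admitting a `k`-dimensional
orthogonal representation. -/
noncomputable def orthRank {V : Type} (G : SimpleGraph V) : ℕ :=
  sInf {k | 1 ≤ k ∧ ∃ ψ : V → Fin k → ℂ, IsOrthRep G k ψ}

/-- A quantum `k`-colouring of `G` on `ℂ^d`: projective measurements
`{E v c}_{c ∈ Fin k}` such that `E u c * E v c = 0` for adjacent `u, v`. -/
def IsQuantumColoring {V : Type} (G : SimpleGraph V) (k d : ℕ)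
    (E : V → Fin k → Matrix (Fin d) (Fin d) ℂ) : Prop :=
  (∀ v c, (E v c).IsHermitian) ∧
  (∀ v c, E v c * E v c = E v c) ∧
  (∀ v, ∑ c, E v c = 1) ∧
  ∀ u v, G.Adj u v → ∀ c, E u c * E v c = 0

/-- The quantum chromatic number `χ_q(G)`: the least `k ≥ 1` for which a quantum
`k`-colouring exists on `ℂ^d` for some `d ≥ 1`. -/
noncomputable def quantumChromaticNumber {V : Type} (G : SimpleGraph V) : ℕ :=
  sInf {k | 1 ≤ k ∧ ∃ d, 1 ≤ d ∧
    ∃ E : V → Fin k → Matrix (Fin d) (Fin d) ℂ, IsQuantumColoring G k d E}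

/-- A rank-`r` quantum `k`-colouring: a quantum `k`-colouring on `ℂ^(r*k)` in which
every projector has rank exactly `r`. -/
def IsRankRQuantumColoring {V : Type} (G : SimpleGraph V) (r k : ℕ)
    (E : V → Fin k → Matrix (Fin (r * k)) (Fin (r * k)) ℂ) : Prop :=
  IsQuantumColoring G k (r * k) E ∧ ∀ v c, (E v c).rank = r

/-- The rank-`r` quantum chromatic number `χ_q^{(r)}(G)`. -/
noncomputable def rankChromaticNumber {V : Type} (G : SimpleGraph V) (r : ℕ) : ℕ :=
  sInf {k | 1 ≤ k ∧ ∃ E : V → Fin k → Matrix (Fin (r * k)) (Fin (r * k)) ℂ,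
    IsRankRQuantumColoring G r k E}

/-- The chromatic number of `G` as a natural number: the least `k ≥ 1` for which a
proper `k`-colouring exists. -/
noncomputable def chromNat {V : Type} (G : SimpleGraph V) : ℕ :=
  sInf {k | 1 ≤ k ∧ G.Colorable k}

/-- The clique number `ω(G)`. -/
noncomputable def cliqueNum' {V : Type} (G : SimpleGraph V) : ℕ :=
  sSup {n | ∃ S : Finset V, G.IsNClique n S}

-- AUX

theorem rankone_to_orth {V : Type} (G : SimpleGraph V) (k : ℕ) (hk : 1 ≤ k)
    (h : ∃ E : V → Fin k → Matrix (Fin (1 * k)) (Fin (1 * k)) ℂ,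
        IsRankRQuantumColoring G 1 k E) :
    ∃ ψ : V → Fin k → ℂ, IsOrthRep G k ψ := by
  obtain ⟨E, ⟨hH, hP, hS, hA⟩, hrank⟩ := h
  set c0 : Fin k := ⟨0, hk⟩ with hc0
  -- each E v c0 is nonzero
  have hne : ∀ v, E v c0 ≠ 0 := by
    intro v hv
    have h1 := hrank v c0
    rw [hv, Matrix.rank_zero] at h1
    exact one_ne_zero h1.symm
  have hx : ∀ v, ∃ x : Fin (1 * k) → ℂ, (E v c0).mulVec x ≠ 0 := by
    intro v
    by_contra h'
    push_neg at h'
    apply hne v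
    ext i j
    have := congrFun (h' (Pi.single j 1)) i
    simpa [Matrix.mulVec_single] using this
  choose x hxne using hx
  set w : V → Fin (1 * k) → ℂ := fun v => (E v c0).mulVec (x v) with hw
  set s : V → ℝ := fun v => ∑ i, Complex.normSq (w v i) with hs
  have hspos : ∀ v, 0 < s v := by
    intro v
    have hnz : ∃ i, w v i ≠ 0 := by
      by_contra h'
      push_neg at h'
      exact hxne v (funext h')
    obtain ⟨i, hi⟩ := hnz
    refine Finset.sum_pos' (fun j _ => Complex.normSq_nonneg _) ⟨i, Finset.mem_univ i, ?_⟩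
    exact Complex.normSq_pos.2 hi
  set t : V → ℝ := fun v => Real.sqrt (s v) with ht
  have htpos : ∀ v, 0 < t v := fun v => Real.sqrt_pos.2 (hspos v)
  set e : Fin k ≃ Fin (1 * k) := finCongr (one_mul k).symm with he
  set ψ : V → Fin k → ℂ := fun v i => w v (e i) / (t v : ℂ) with hψ
  -- big inner product
  have hDdot : ∀ u v, (∑ j, conj (w u j) * (w v j)) = dotProduct (star (w u)) (w v) := by
    intro u v
    simp [dotProduct, Pi.star_apply, Complex.star_def]
  have hcd : ∀ u v, cdot (ψ u) (ψ v) = (∑ j, conj (w u j) * (w v j)) / ((t u : ℂ) * (t v : ℂ)) := by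
    intro u v
    rw [← Equiv.sum_comp e (fun j => conj (w u j) * (w v j))]
    rw [cdot, Finset.sum_div]
    refine Finset.sum_congr rfl fun i _ => ?_
    simp only [hψ]
    rw [map_div₀, Complex.conj_ofReal]
    field_simp
  have hDadj : ∀ u v, G.Adj u v → (∑ j, conj (w u j) * (w v j)) = 0 := by
    intro u v huv
    rw [hDdot, hw]
    rw [Matrix.star_mulVec, Matrix.dotProduct_mulVec, Matrix.vecMul_vecMul,
      (hH u c0).eq, hA u v huv c0, Matrix.vecMul_zero, zero_dotProduct]
  have hDself : ∀ v, (∑ j, conj (w v j) * (w v j)) = (s v : ℂ) := by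
    intro v
    rw [hs]
    push_cast
    refine Finset.sum_congr rfl fun i _ => ?_
    exact Complex.normSq_eq_conj_mul_self.symm
  refine ⟨ψ, fun v => ?_, fun u v huv => by rw [hcd, hDadj u v huv, zero_div]⟩
  rw [hcd, hDself]
  rw [← Complex.ofReal_mul, Real.mul_self_sqrt (hspos v).le]
  exact div_self (by exact_mod_cast (hspos v).ne')

theorem exists_rank_one (V : Type) [Fintype V] (G : SimpleGraph V) :
    ∃ k, 1 ≤ k ∧ ∃ E : V → Fin k → Matrix (Fin (1 * k)) (Fin (1 * k)) ℂ,
      IsRankRQuantumColoring G 1 k E := by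
  classical
  set n : ℕ := Fintype.card V + 1 with hn
  refine ⟨n, Nat.succ_le_succ (Nat.zero_le _), ?_⟩
  set f : V → Fin n := fun v => ((Fintype.equivFin V) v).castSucc with hf
  have hfinj : Function.Injective f := by
    intro a b hab
    exact (Fintype.equivFin V).injective (Fin.castSucc_injective _ hab)
  set eq : Fin n ≃ Fin (1 * n) := finCongr (one_mul n).symm with heq
  set E : V → Fin n → Matrix (Fin (1 * n)) (Fin (1 * n)) ℂ :=
    fun v c => Matrix.diagonal (Pi.single (eq (c + f v)) 1) with hE
  have hsingle_star : ∀ (a : Fin (1 * n)),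
      star ((Pi.single a (1 : ℂ)) : Fin (1 * n) → ℂ) = Pi.single a (1 : ℂ) := by
    intro a
    funext i
    by_cases hia : i = a <;> simp [hia, Pi.single_apply]
  have hsmul : ∀ (a b : Fin (1 * n)),
      (fun i => Pi.single a (1:ℂ) i * Pi.single b (1:ℂ) i) =
        if a = b then Pi.single a (1:ℂ) else 0 := by
    intro a b
    funext i
    by_cases hab : a = b
    · subst hab
      by_cases hia : i = a <;> simp [hia, Pi.single_apply]
    · by_cases hia : i = a <;> by_cases hib : i = b <;>
        simp_all [Pi.single_apply]
  refine ⟨E, ⟨⟨?_, ?_, ?_, ?_⟩, ?_⟩⟩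
  · intro v c
    rw [Matrix.IsHermitian, hE]
    simp only
    rw [Matrix.diagonal_conjTranspose, hsingle_star]
  · intro v c
    simp only [hE]
    rw [Matrix.diagonal_mul_diagonal]
    rw [hsmul, if_pos rfl]
  · intro v
    have key : ∑ c : Fin n, Matrix.diagonal (Pi.single (eq (c + f v)) (1:ℂ)) =
        Matrix.diagonal (∑ c : Fin n, Pi.single (eq (c + f v)) (1:ℂ)) := by
      symm
      apply map_sum (Matrix.diagonalAddMonoidHom (Fin (1*n)) ℂ)
    rw [hE]
    simp only
    rw [key]
    haveI : NeZero n := ⟨Nat.succ_ne_zero _⟩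
    have hbij : ∑ c : Fin n, ((Pi.single (eq (c + f v)) (1:ℂ)) : Fin (1 * n) → ℂ) = fun _ => (1:ℂ) := by
      funext i
      rw [Finset.sum_apply]
      have h1 : ∀ c : Fin n, ((Pi.single (eq (c + f v)) (1:ℂ)) : Fin (1 * n) → ℂ) i
          = if c = eq.symm i - f v then 1 else 0 := by
        intro c
        by_cases hc : c = eq.symm i - f v
        · subst hc
          have h2 : eq (eq.symm i - f v + f v) = i := by
            rw [sub_add_cancel]
            exact eq.apply_symm_apply i
          simp [Pi.single_apply, h2]
        · have h3 : i ≠ eq (c + f v) := by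
            intro h
            apply hc
            have h4 : eq.symm i = c + f v := by rw [h]; exact eq.symm_apply_apply _
            rw [h4]
            simp
          simp [Pi.single_apply, h3, hc]
      rw [Finset.sum_congr rfl (fun c _ => h1 c),
        Finset.sum_ite_eq' Finset.univ (eq.symm i - f v) (fun _ => (1:ℂ))]
      simp
    rw [hbij, Matrix.diagonal_one]
  · intro u v huv c
    simp only [hE]
    rw [Matrix.diagonal_mul_diagonal]
    have hne : eq (c + f u) ≠ eq (c + f v) := by
      intro hcontra
      have := eq.injective hcontra
      have := add_left_cancel this
      exact G.ne_of_adj huv (hfinj this)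
    rw [hsmul, if_neg hne]
    exact Matrix.diagonal_zero
  · intro v c
    simp only [hE]
    rw [Matrix.rank_diagonal]
    have hc : Fintype.card {i // ((Pi.single (eq (c + f v)) (1:ℂ)) : Fin (1 * n) → ℂ) i ≠ 0}
        = Fintype.card {i // i = eq (c + f v)} := by
      apply Fintype.card_congr
      apply Equiv.subtypeEquivRight
      intro i
      by_cases hia : i = eq (c + f v) <;> simp [hia, Pi.single_apply]
    exact hc.trans (Fintype.card_subtype_eq _)

/-- a rank-1 quantum `k`-colouring yields a `k`-dimensional orthogonal
representation; in particular `ξ(G) ≤ χ_q^{(1)}(G)`. -/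
theorem orthRank_le_rank_one_chromatic {V : Type} [Fintype V]
    (G : SimpleGraph V) (k : ℕ) (hk : 1 ≤ k) :
    ((∃ E : V → Fin k → Matrix (Fin (1 * k)) (Fin (1 * k)) ℂ,
        IsRankRQuantumColoring G 1 k E) →
      ∃ ψ : V → Fin k → ℂ, IsOrthRep G k ψ) ∧
    orthRank G ≤ rankChromaticNumber G 1 := by
  constructor
  · exact rankone_to_orth G k hk
  · have hne : {k | 1 ≤ k ∧ ∃ E : V → Fin k → Matrix (Fin (1 * k)) (Fin (1 * k)) ℂ,
        IsRankRQuantumColoring G 1 k E}.Nonempty := by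
      obtain ⟨k₀, hk₀, hE⟩ := exists_rank_one V G
      exact ⟨k₀, hk₀, hE⟩
    have hmem := Nat.sInf_mem hne
    obtain ⟨hk', hE⟩ := hmem
    exact Nat.sInf_le ⟨hk', rankone_to_orth G _ hk' hE⟩
end

section
/- Let G be a finite simple graph and let k ∈ {2, 4, 8}. If G admits an assignment of unit vectors ψ_v ∈ ℝ^k to its vertices such that ⟨ψ_u, ψ_v⟩ = 0 whenever u and v are adjacent (a real orthogonal representation in ℝ^k), then G admits a rank-1 quantum k-colouring. -/
open scoped ComplexConjugate

namespace QCaux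

open Matrix
open scoped ComplexOrder

lemma key1 {k : ℕ} (M : Matrix (Fin k) (Fin k) ℤ)
    (h : ∀ i j, ∑ a, M a i * M a j = if i = j then 1 else 0)
    (x y : Fin k → ℝ) :
    ∑ i, (∑ a, (M i a : ℝ) * x a) * (∑ b, (M i b : ℝ) * y b) = ∑ a, x a * y a := by
  have e1 : ∀ i : Fin k, (∑ a, (M i a : ℝ) * x a) * (∑ b, (M i b : ℝ) * y b)
      = ∑ a, ∑ b, (M i a : ℝ) * (M i b : ℝ) * (x a * y b) := by
    intro i
    rw [Finset.sum_mul_sum]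
    exact Finset.sum_congr rfl fun a _ => Finset.sum_congr rfl fun b _ => by ring
  simp_rw [e1]
  rw [Finset.sum_comm]
  have e2 : ∀ a, (∑ i : Fin k, ∑ b, (M i a : ℝ) * (M i b : ℝ) * (x a * y b)) = x a * y a := by
    intro a
    rw [Finset.sum_comm]
    have h2 : ∀ b, (∑ i, (M i a : ℝ) * (M i b : ℝ) * (x a * y b))
        = (if a = b then (1:ℝ) else 0) * (x a * y b) := by
      intro b
      rw [← Finset.sum_mul]
      congr 1
      have hc : ((∑ i, M i a * M i b : ℤ) : ℝ) = if a = b then (1:ℝ) else 0 := by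
        rw [h a b]; split <;> simp
      rw [← hc]; push_cast; ring_nf
    simp_rw [h2]
    simp
  simp_rw [e2]

lemma key2 {k : ℕ} (M N : Matrix (Fin k) (Fin k) ℤ)
    (h : ∀ i j, ∑ a, (M a i * N a j + N a i * M a j) = 0)
    (x : Fin k → ℝ) :
    ∑ i, (∑ a, (M i a : ℝ) * x a) * (∑ b, (N i b : ℝ) * x b) = 0 := by
  set S := ∑ i, (∑ a, (M i a : ℝ) * x a) * (∑ b, (N i b : ℝ) * x b) with hS
  have e1 : S = ∑ i, ∑ a, ∑ b, (M i a : ℝ) * (N i b : ℝ) * (x a * x b) := by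
    rw [hS]
    refine Finset.sum_congr rfl fun i _ => ?_
    rw [Finset.sum_mul_sum]
    exact Finset.sum_congr rfl fun a _ => Finset.sum_congr rfl fun b _ => by ring
  have e2 : S = ∑ i, ∑ a, ∑ b, (N i a : ℝ) * (M i b : ℝ) * (x a * x b) := by
    rw [hS]
    refine Finset.sum_congr rfl fun i _ => ?_
    rw [mul_comm, Finset.sum_mul_sum]
    exact Finset.sum_congr rfl fun a _ => Finset.sum_congr rfl fun b _ => by ring
  have hadd : S + S = 0 := by
    nth_rewrite 1 [e1]
    nth_rewrite 1 [e2]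
    rw [← Finset.sum_add_distrib]
    simp_rw [← Finset.sum_add_distrib]
    rw [Finset.sum_comm]
    apply Finset.sum_eq_zero; intro a _
    rw [Finset.sum_comm]
    apply Finset.sum_eq_zero; intro b _
    have : ∀ i : Fin k, (M i a : ℝ) * (N i b : ℝ) * (x a * x b) + (N i a : ℝ) * (M i b : ℝ) * (x a * x b)
        = ((M i a : ℝ) * (N i b : ℝ) + (N i a : ℝ) * (M i b : ℝ)) * (x a * x b) := fun i => by ring
    simp_rw [this, ← Finset.sum_mul]
    have hz : (∑ i, ((M i a : ℝ) * (N i b : ℝ) + (N i a : ℝ) * (M i b : ℝ))) = 0 := by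
      have := h a b
      exact_mod_cast congrArg (fun z : ℤ => (z : ℝ)) this
    rw [hz, zero_mul]
  linarith

lemma aux_main {V : Type} [Fintype V] (G : SimpleGraph V) (k : ℕ)
    (L : Fin k → Matrix (Fin k) (Fin k) ℤ)
    (hP1 : ∀ c i j, ∑ a, L c a i * L c a j = if i = j then 1 else 0)
    (hP2 : ∀ c d : Fin k, c ≠ d → ∀ i j, ∑ a, (L c a i * L d a j + L d a i * L c a j) = 0)
    (ψ : V → Fin k → ℝ)
    (hunit : ∀ v, ∑ i, ψ v i * ψ v i = 1)
    (horth : ∀ u v, G.Adj u v → ∑ i, ψ u i * ψ v i = 0) :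
    ∃ E : V → Fin k → Matrix (Fin (1 * k)) (Fin (1 * k)) ℂ,
      IsRankRQuantumColoring G 1 k E := by
  classical
  set wR : V → Fin k → Fin k → ℝ := fun v c i => ∑ a, (L c i a : ℝ) * ψ v a with hwR
  set w : V → Fin k → Fin k → ℂ := fun v c i => ((wR v c i : ℝ) : ℂ) with hw
  have hconjw : ∀ v c i, conj (w v c i) = w v c i := fun v c i => Complex.conj_ofReal _
  have hstarw : ∀ v c i, star (w v c i) = w v c i := fun v c i => Complex.conj_ofReal _
  have hip : ∀ (u v : V) (c d : Fin k), ∑ i, w u c i * w v d i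
      = ((∑ i, wR u c i * wR v d i : ℝ) : ℂ) := by
    intro u v c d; rw [hw]; push_cast; rfl
  have hnorm : ∀ v c, ∑ i, wR v c i * wR v c i = 1 := by
    intro v c
    rw [hwR]
    exact (key1 (L c) (hP1 c) (ψ v) (ψ v)).trans (hunit v)
  have hGip : ∀ u v, G.Adj u v → ∀ c, ∑ i, wR u c i * wR v c i = 0 := by
    intro u v huv c
    rw [hwR]
    exact (key1 (L c) (hP1 c) (ψ u) (ψ v)).trans (horth u v huv)
  have hcd : ∀ v (c d : Fin k), c ≠ d → ∑ i, wR v c i * wR v d i = 0 := by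
    intro v c d hne
    rw [hwR]
    exact key2 (L c) (L d) (hP2 c d hne) (ψ v)
  have hCnorm : ∀ v c, ∑ i, w v c i * w v c i = 1 := by
    intro v c; rw [hip, hnorm]; norm_num
  have hCadj : ∀ u v, G.Adj u v → ∀ c, ∑ i, w u c i * w v c i = 0 := by
    intro u v huv c; rw [hip, hGip u v huv c]; norm_num
  have hCcd : ∀ v (c d : Fin k), c ≠ d → ∑ i, w v c i * w v d i = 0 := by
    intro v c d hne; rw [hip, hcd v c d hne]; norm_num
  set E₀ : V → Fin k → Matrix (Fin k) (Fin k) ℂ :=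
    fun v c => Matrix.vecMulVec (w v c) (w v c) with hE₀
  have hHerm : ∀ v c, (E₀ v c).IsHermitian := by
    intro v c
    show (E₀ v c)ᴴ = E₀ v c
    ext i j
    simp only [hE₀, Matrix.conjTranspose_apply, Matrix.vecMulVec_apply]
    rw [StarMul.star_mul, hstarw, hstarw, mul_comm]
  have hidem : ∀ v c, E₀ v c * E₀ v c = E₀ v c := by
    intro v c
    ext i j
    rw [Matrix.mul_apply]
    simp only [hE₀, Matrix.vecMulVec_apply]
    have : ∀ m, w v c i * w v c m * (w v c m * w v c j)
        = (w v c i * w v c j) * (w v c m * w v c m) := fun m => by ring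
    simp_rw [this, ← Finset.mul_sum, hCnorm, mul_one]
  have hsum : ∀ v, ∑ c, E₀ v c = 1 := by
    intro v
    set B : Matrix (Fin k) (Fin k) ℂ := Matrix.of fun i c => w v c i with hB
    have hBB : Bᴴ * B = 1 := by
      ext c d
      rw [Matrix.mul_apply, Matrix.one_apply]
      simp only [hB, Matrix.conjTranspose_apply, Matrix.of_apply, hconjw, hstarw]
      split_ifs with hcd'
      · subst hcd'; exact hCnorm v c
      · exact hCcd v c d hcd'
    have hBBT : B * Bᴴ = 1 := mul_eq_one_comm.mp hBB
    ext i j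
    rw [Matrix.sum_apply]
    have : ∑ c, E₀ v c i j = (B * Bᴴ) i j := by
      rw [Matrix.mul_apply]
      apply Finset.sum_congr rfl
      intro c _
      simp only [hE₀, hB, Matrix.vecMulVec_apply, Matrix.conjTranspose_apply,
        Matrix.of_apply, hconjw, hstarw]
    rw [this, hBBT]
  have hadj : ∀ u v, G.Adj u v → ∀ c, E₀ u c * E₀ v c = 0 := by
    intro u v huv c
    ext i j
    rw [Matrix.mul_apply]
    simp only [hE₀, Matrix.vecMulVec_apply, Matrix.zero_apply]
    have : ∀ m, w u c i * w u c m * (w v c m * w v c j)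
        = (w u c i * w v c j) * (w u c m * w v c m) := fun m => by ring
    simp_rw [this, ← Finset.mul_sum, hCadj u v huv c, mul_zero]
  have hrank : ∀ v c, (E₀ v c).rank = 1 := by
    intro v c
    set A : Matrix (Fin k) (Fin 1) ℂ := Matrix.replicateCol (Fin 1) (w v c) with hA
    have hEA : E₀ v c = A * Aᴴ := by
      ext i j
      rw [Matrix.mul_apply]
      simp [hA, hE₀, Matrix.vecMulVec_apply, Matrix.conjTranspose_apply, hconjw, hstarw]
    have hAA : Aᴴ * A = 1 := by
      ext u u'
      rw [Matrix.mul_apply, Matrix.one_apply]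
      simp only [hA, Matrix.conjTranspose_apply, Matrix.replicateCol_apply, hconjw, hstarw]
      have : u = u' := Subsingleton.elim u u'
      subst this
      simp [hCnorm v c]
    rw [hEA, Matrix.rank_self_mul_conjTranspose, ← Matrix.rank_conjTranspose_mul_self,
      hAA, Matrix.rank_one]
    simp
  -- transport along `1 * k = k`
  set e : Fin (1 * k) ≃ Fin k := finCongr (one_mul k) with he
  refine ⟨fun v c => (E₀ v c).submatrix e e, ⟨⟨?_, ?_, ?_, ?_⟩, ?_⟩⟩
  · intro v c
    show _ᴴ = _
    rw [Matrix.conjTranspose_submatrix, (hHerm v c).eq]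
  · intro v c
    rw [Matrix.submatrix_mul_equiv, hidem]
  · intro v
    have : ∑ c, (E₀ v c).submatrix e e = (∑ c, E₀ v c).submatrix e e := by
      ext i j
      simp [Matrix.sum_apply]
    rw [this, hsum, Matrix.submatrix_one_equiv]
  · intro u v huv c
    rw [Matrix.submatrix_mul_equiv, hadj u v huv c]
    ext i j
    simp
  · intro v c
    rw [Matrix.rank_submatrix]
    exact hrank v c

def L2 : Fin 2 → Matrix (Fin 2) (Fin 2) ℤ :=
  ![!![1, 0; 0, 1],
    !![0, -1; 1, 0]]

def L4 : Fin 4 → Matrix (Fin 4) (Fin 4) ℤ :=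
  ![!![1, 0, 0, 0; 0, 1, 0, 0; 0, 0, 1, 0; 0, 0, 0, 1],
    !![0, -1, 0, 0; 1, 0, 0, 0; 0, 0, 0, -1; 0, 0, 1, 0],
    !![0, 0, -1, 0; 0, 0, 0, 1; 1, 0, 0, 0; 0, -1, 0, 0],
    !![0, 0, 0, -1; 0, 0, -1, 0; 0, 1, 0, 0; 1, 0, 0, 0]]

def L8 : Fin 8 → Matrix (Fin 8) (Fin 8) ℤ :=
  ![!![1, 0, 0, 0, 0, 0, 0, 0; 0, 1, 0, 0, 0, 0, 0, 0; 0, 0, 1, 0, 0, 0, 0, 0; 0, 0, 0, 1, 0, 0, 0, 0; 0, 0, 0, 0, 1, 0, 0, 0; 0, 0, 0, 0, 0, 1, 0, 0; 0, 0, 0, 0, 0, 0, 1, 0; 0, 0, 0, 0, 0, 0, 0, 1],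
    !![0, -1, 0, 0, 0, 0, 0, 0; 1, 0, 0, 0, 0, 0, 0, 0; 0, 0, 0, -1, 0, 0, 0, 0; 0, 0, 1, 0, 0, 0, 0, 0; 0, 0, 0, 0, 0, -1, 0, 0; 0, 0, 0, 0, 1, 0, 0, 0; 0, 0, 0, 0, 0, 0, 0, 1; 0, 0, 0, 0, 0, 0, -1, 0],
    !![0, 0, -1, 0, 0, 0, 0, 0; 0, 0, 0, 1, 0, 0, 0, 0; 1, 0, 0, 0, 0, 0, 0, 0; 0, -1, 0, 0, 0, 0, 0, 0; 0, 0, 0, 0, 0, 0, -1, 0; 0, 0, 0, 0, 0, 0, 0, -1; 0, 0, 0, 0, 1, 0, 0, 0; 0, 0, 0, 0, 0, 1, 0, 0],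
    !![0, 0, 0, -1, 0, 0, 0, 0; 0, 0, -1, 0, 0, 0, 0, 0; 0, 1, 0, 0, 0, 0, 0, 0; 1, 0, 0, 0, 0, 0, 0, 0; 0, 0, 0, 0, 0, 0, 0, -1; 0, 0, 0, 0, 0, 0, 1, 0; 0, 0, 0, 0, 0, -1, 0, 0; 0, 0, 0, 0, 1, 0, 0, 0],
    !![0, 0, 0, 0, -1, 0, 0, 0; 0, 0, 0, 0, 0, 1, 0, 0; 0, 0, 0, 0, 0, 0, 1, 0; 0, 0, 0, 0, 0, 0, 0, 1; 1, 0, 0, 0, 0, 0, 0, 0; 0, -1, 0, 0, 0, 0, 0, 0; 0, 0, -1, 0, 0, 0, 0, 0; 0, 0, 0, -1, 0, 0, 0, 0],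
    !![0, 0, 0, 0, 0, -1, 0, 0; 0, 0, 0, 0, -1, 0, 0, 0; 0, 0, 0, 0, 0, 0, 0, 1; 0, 0, 0, 0, 0, 0, -1, 0; 0, 1, 0, 0, 0, 0, 0, 0; 1, 0, 0, 0, 0, 0, 0, 0; 0, 0, 0, 1, 0, 0, 0, 0; 0, 0, -1, 0, 0, 0, 0, 0],
    !![0, 0, 0, 0, 0, 0, -1, 0; 0, 0, 0, 0, 0, 0, 0, -1; 0, 0, 0, 0, -1, 0, 0, 0; 0, 0, 0, 0, 0, 1, 0, 0; 0, 0, 1, 0, 0, 0, 0, 0; 0, 0, 0, -1, 0, 0, 0, 0; 1, 0, 0, 0, 0, 0, 0, 0; 0, 1, 0, 0, 0, 0, 0, 0],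
    !![0, 0, 0, 0, 0, 0, 0, -1; 0, 0, 0, 0, 0, 0, 1, 0; 0, 0, 0, 0, 0, -1, 0, 0; 0, 0, 0, 0, -1, 0, 0, 0; 0, 0, 0, 1, 0, 0, 0, 0; 0, 0, 1, 0, 0, 0, 0, 0; 0, -1, 0, 0, 0, 0, 0, 0; 1, 0, 0, 0, 0, 0, 0, 0]]


end QCaux

/-- if `k ∈ {2, 4, 8}` and `G` has a real orthogonal representation in
`ℝ^k`, then `G` admits a rank-1 quantum `k`-colouring. -/
theorem rank_one_colouring_of_real_orth_rep {V : Type} [Fintype V]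
    (G : SimpleGraph V) (k : ℕ) (hk : k = 2 ∨ k = 4 ∨ k = 8)
    (ψ : V → Fin k → ℝ)
    (hunit : ∀ v, ∑ i, ψ v i * ψ v i = 1)
    (horth : ∀ u v, G.Adj u v → ∑ i, ψ u i * ψ v i = 0) :
    ∃ E : V → Fin k → Matrix (Fin (1 * k)) (Fin (1 * k)) ℂ,
      IsRankRQuantumColoring G 1 k E := by
  rcases hk with rfl | rfl | rfl
  · exact QCaux.aux_main G 2 QCaux.L2 (by decide) (by decide) ψ hunit horth
  · exact QCaux.aux_main G 4 QCaux.L4 (by decide) (by decide) ψ hunit horth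
  · exact QCaux.aux_main G 8 QCaux.L8 (by decide) (by decide) ψ hunit horth
end

section
/- Let G be a finite simple graph. Then G admits a quantum 2-colouring if and only if G is bipartite (i.e., admits a classical proper 2-colouring). In particular, a non-bipartite graph has quantum chromatic number at least 3. -/
open scoped ComplexConjugate

lemma aux_one_ne_zero {d : ℕ} (hd : 1 ≤ d) :
    (1 : Matrix (Fin d) (Fin d) ℂ) ≠ 0 := by
  intro h
  have h0 : (0 : ℕ) < d := hd
  have := congrFun (congrFun h ⟨0, h0⟩) ⟨0, h0⟩
  rw [Matrix.one_apply_eq] at this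
  simp at this

lemma aux_classical_to_quantum {V : Type} (G : SimpleGraph V) (k : ℕ)
    (h : G.Colorable k) :
    ∃ E : V → Fin k → Matrix (Fin 1) (Fin 1) ℂ, IsQuantumColoring G k 1 E := by
  obtain ⟨C⟩ := h
  refine ⟨fun v c => if c = C v then 1 else 0, ?_, ?_, ?_, ?_⟩
  · intro v c
    dsimp only
    split_ifs
    · exact Matrix.isHermitian_one
    · exact Matrix.isHermitian_zero
  · intro v c
    dsimp only
    split_ifs <;> simp
  · intro v
    simp
  · intro u v huv c
    have hne : C u ≠ C v := C.valid huv
    show (if c = C u then (1 : Matrix (Fin 1) (Fin 1) ℂ) else 0) *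
        (if c = C v then 1 else 0) = 0
    split_ifs with h1 h2
    · exact absurd (h1.symm.trans h2) hne
    all_goals simp

lemma aux_quantum_two {V : Type} (G : SimpleGraph V) (d : ℕ) (hd : 1 ≤ d)
    (E : V → Fin 2 → Matrix (Fin d) (Fin d) ℂ)
    (hE : IsQuantumColoring G 2 d E) : G.Colorable 2 := by
  obtain ⟨_hherm, hidem, hsum, horth⟩ := hE
  have hsum' : ∀ v, E v 0 + E v 1 = 1 := by
    intro v
    have := hsum v
    rwa [Fin.sum_univ_two] at this
  -- adjacent: E v 0 = 1 - E u 0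
  have hadj : ∀ u v, G.Adj u v → E v 0 = 1 - E u 0 := by
    intro u v h
    have h0 := horth u v h 0
    have h1 := horth u v h 1
    have e1u : E u 1 = 1 - E u 0 := by
      have := hsum' u; linear_combination (norm := abel) this
    have e1v : E v 1 = 1 - E v 0 := by
      have := hsum' v; linear_combination (norm := abel) this
    rw [e1u, e1v] at h1
    have hexp : (1 - E u 0) * (1 - E v 0)
        = 1 - E u 0 - E v 0 + E u 0 * E v 0 := by noncomm_ring
    rw [hexp, h0, add_zero] at h1
    have : (1 : Matrix (Fin d) (Fin d) ℂ) - E u 0 = E v 0 := by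
      rwa [sub_eq_zero] at h1
    exact this.symm
  -- no projector equals its complement
  have hne : ∀ v, E v 0 ≠ 1 - E v 0 := by
    intro v h
    have hi := hidem v 0
    have h2 : E v 0 + E v 0 = 1 := by
      nth_rewrite 1 [h]
      abel
    have h4 : (E v 0 + E v 0) * (E v 0 + E v 0) = 1 := by rw [h2, one_mul]
    have hexp : (E v 0 + E v 0) * (E v 0 + E v 0)
        = (E v 0 * E v 0) + (E v 0 * E v 0) + ((E v 0 * E v 0) + (E v 0 * E v 0)) := by
      noncomm_ring
    rw [hexp, hi, h2] at h4
    have : (1 : Matrix (Fin d) (Fin d) ℂ) = 0 := by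
      have := add_eq_left.mp h4
      exact this
    exact aux_one_ne_zero hd this
  letI : IsWellOrder (Matrix (Fin d) (Fin d) ℂ) WellOrderingRel :=
    WellOrderingRel.isWellOrder
  letI : LinearOrder (Matrix (Fin d) (Fin d) ℂ) :=
    IsWellOrder.linearOrder WellOrderingRel
  classical
  refine ⟨⟨fun v => if E v 0 < 1 - E v 0 then 0 else 1, ?_⟩⟩
  intro u v huv
  have h1 : E v 0 = 1 - E u 0 := hadj u v huv
  have h2 : (1 : Matrix (Fin d) (Fin d) ℂ) - E v 0 = E u 0 := by
    rw [h1, sub_sub_cancel]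
  rcases lt_or_gt_of_ne (hne u) with hlt | hgt
  · rw [if_pos hlt, h1]
    simp only [sub_sub_cancel]
    rw [if_neg (asymm hlt)]
    simp
  · rw [if_neg (asymm hgt), h1]
    simp only [sub_sub_cancel]
    rw [if_pos hgt]
    simp

/-- a graph admits a quantum 2-colouring iff it is bipartite
(admits a classical proper 2-colouring); in particular a non-bipartite graph has
quantum chromatic number at least 3. -/
theorem quantum_two_colouring_iff_bipartite {V : Type} [Fintype V]
    (G : SimpleGraph V) :
    ((∃ d, 1 ≤ d ∧ ∃ E : V → Fin 2 → Matrix (Fin d) (Fin d) ℂ,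
        IsQuantumColoring G 2 d E) ↔ G.Colorable 2) ∧
    (¬ G.Colorable 2 → 3 ≤ quantumChromaticNumber G) := by
  constructor
  · constructor
    · rintro ⟨d, hd, E, hE⟩
      exact aux_quantum_two G d hd E hE
    · intro h
      obtain ⟨E, hE⟩ := aux_classical_to_quantum G 2 h
      exact ⟨1, le_refl 1, E, hE⟩
  · intro h2
    have hne : {k | 1 ≤ k ∧ ∃ d, 1 ≤ d ∧
        ∃ E : V → Fin k → Matrix (Fin d) (Fin d) ℂ, IsQuantumColoring G k d E}.Nonempty := by
      refine ⟨Fintype.card V + 1, Nat.succ_le_succ (Nat.zero_le _), 1, le_refl 1, ?_⟩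
      exact aux_classical_to_quantum G _
        ((G.colorable_of_fintype).mono (Nat.le_succ _))
    refine le_csInf hne ?_
    rintro k ⟨hk1, d, hd, E, hE⟩
    by_contra hlt
    push_neg at hlt
    interval_cases k
    · -- k = 1 : no edges, so colorable
      apply h2
      refine ⟨⟨fun _ => 0, ?_⟩⟩
      intro u v huv
      exfalso
      obtain ⟨_, _, hsum, horth⟩ := hE
      have hu : E u 0 = 1 := by
        have := hsum u; rwa [Fin.sum_univ_one] at this
      have hv : E v 0 = 1 := by
        have := hsum v; rwa [Fin.sum_univ_one] at this
      have := horth u v huv 0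
      rw [hu, hv, one_mul] at this
      exact aux_one_ne_zero hd this
    · exact h2 (aux_quantum_two G d hd E hE)
end

section
/- Let G be a finite simple graph, and r, k ≥ 1. If G admits a rank-r quantum k-colouring, then G admits an (r,k)-clump representation. In particular ξ_c^{(r)}(G) ≤ χ_q^{(r)}(G). -/
open scoped ComplexConjugate

/-- An `(r,k)`-vector clump: `r*k` pairwise orthogonal unit vectors in `ℂ^(r*k)`. -/
def IsClump (r k : ℕ) (ψ : Fin r → Fin k → Fin (r * k) → ℂ) : Prop :=
  ∀ i j i' j', cdot (ψ i j) (ψ i' j') = if i = i' ∧ j = j' then (1 : ℂ) else 0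

/-- Orthogonality of two `(r,k)`-clumps. -/
def ClumpOrthogonal (r k : ℕ) (ψ φ : Fin r → Fin k → Fin (r * k) → ℂ) : Prop :=
  ∀ i i', ∑ j, cdot (ψ i j) (φ i' j) = 0

/-- An `(r,k)`-clump representation of `G`. -/
def IsClumpRep {V : Type} (G : SimpleGraph V) (r k : ℕ)
    (ψ : V → Fin r → Fin k → Fin (r * k) → ℂ) : Prop :=
  (∀ v, IsClump r k (ψ v)) ∧ ∀ u v, G.Adj u v → ClumpOrthogonal r k (ψ u) (ψ v)

/-- The rank-`r` clump rank `ξ_c^{(r)}(G)`. -/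
noncomputable def clumpRank {V : Type} (G : SimpleGraph V) (r : ℕ) : ℕ :=
  sInf {k | 1 ≤ k ∧ ∃ ψ, IsClumpRep G r k ψ}

/-!
The projectors `P_c = E^v_c` of one vertex are self-adjoint idempotents summing to the identity,
so `∑ c, ‖P_c x‖² = ‖x‖²`; hence `P_c x = x` forces `P_{c'} x = 0`, and the ranges of the `P_c`
are mutually orthogonal `r`-dimensional subspaces. An orthonormal basis of each range gives an
`(r,k)`-clump. On an edge `uv`, `E^u_c E^v_c = 0` makes the `c`-th ranges of `u` and `v`
orthogonal, so every summand of the clump-orthogonality condition vanishes.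

For the inequality, a proper colouring with labels shifted by the vertex colour gives a rank-`r`
quantum colouring, so `χ_q^{(r)}(G)` is attained and its colouring yields a clump representation.
-/

open scoped InnerProductSpace

namespace LinearMap

variable {𝕜 E : Type*} [RCLike 𝕜] [NormedAddCommGroup E] [InnerProductSpace 𝕜 E]

lemma IsSymmetric.range_isOrtho_range_of_mul_eq_zero {P Q : E →ₗ[𝕜] E} (hP : P.IsSymmetric)
    (hPQ : P * Q = 0) : range P ⟂ range Q := by
  rw [Submodule.isOrtho_iff_inner_eq]
  rintro _ ⟨x, rfl⟩ _ ⟨y, rfl⟩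
  rw [hP, ← Module.End.mul_apply, hPQ, zero_apply, inner_zero_right]

lemma IsSymmetricProjection.norm_sq_apply {P : E →ₗ[𝕜] E} (hP : P.IsSymmetricProjection)
    (x : E) : ‖P x‖ ^ 2 = RCLike.re ⟪x, P x⟫_𝕜 := by
  rw [← inner_self_eq_norm_sq (𝕜 := 𝕜), hP.isSymmetric, ← Module.End.mul_apply,
    hP.isIdempotentElem.eq]

variable {ι : Type*} [Fintype ι] {P : ι → E →ₗ[𝕜] E}

lemma sum_norm_sq_apply_of_sum_eq_one (hP : ∀ c, (P c).IsSymmetricProjection)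
    (hsum : ∑ c, P c = 1) (x : E) : ∑ c, ‖P c x‖ ^ 2 = ‖x‖ ^ 2 := by
  simp_rw [(hP _).norm_sq_apply, ← map_sum, ← inner_sum, ← sum_apply, hsum, Module.End.one_apply,
    inner_self_eq_norm_sq]

lemma apply_eq_zero_of_apply_eq_self_of_sum_eq_one (hP : ∀ c, (P c).IsSymmetricProjection)
    (hsum : ∑ c, P c = 1) {c c' : ι} (hne : c ≠ c') {x : E} (hx : P c x = x) : P c' x = 0 := by
  have := Finset.add_le_sum (fun c'' _ => sq_nonneg ‖P c'' x‖) (Finset.mem_univ c)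
    (Finset.mem_univ c') hne
  rw [hx, sum_norm_sq_apply_of_sum_eq_one hP hsum] at this
  exact norm_eq_zero.mp (pow_eq_zero_iff two_ne_zero |>.mp (by linarith [sq_nonneg ‖P c' x‖]))

lemma pairwise_mul_eq_zero_of_sum_eq_one (hP : ∀ c, (P c).IsSymmetricProjection)
    (hsum : ∑ c, P c = 1) : Pairwise fun c c' => P c * P c' = 0 := by
  intro c c' hne
  ext x
  exact apply_eq_zero_of_apply_eq_self_of_sum_eq_one hP hsum hne.symm
    (congr($((hP c').isIdempotentElem.eq) x))

end LinearMap

lemma cdot_ofLp {n : Type} [Fintype n] (x y : EuclideanSpace ℂ n) :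
    cdot x.ofLp y.ofLp = ⟪x, y⟫_ℂ := by
  simp only [cdot, EuclideanSpace.inner_eq_star_dotProduct, dotProduct, Pi.star_apply,
    RCLike.star_def, mul_comm]

section Clump

variable {r k : ℕ}

noncomputable def clumpOfBases {V : Fin k → Submodule ℂ (EuclideanSpace ℂ (Fin (r * k)))}
    (b : ∀ c, OrthonormalBasis (Fin r) ℂ (V c)) : Fin r → Fin k → Fin (r * k) → ℂ :=
  fun i c => (b c i : EuclideanSpace ℂ (Fin (r * k))).ofLp

lemma isClump_clumpOfBases {V : Fin k → Submodule ℂ (EuclideanSpace ℂ (Fin (r * k)))}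
    (hV : Pairwise fun c c' => V c ⟂ V c') (b : ∀ c, OrthonormalBasis (Fin r) ℂ (V c)) :
    IsClump r k (clumpOfBases b) := by
  intro i c i' c'
  simp only [clumpOfBases, cdot_ofLp]
  by_cases hc : c = c'
  · subst hc
    rw [← Submodule.coe_inner, orthonormal_iff_ite.mp (b c).orthonormal]
    simp
  · rw [(hV hc).inner_eq (b c i).2 (b c' i').2]
    simp [hc]

lemma clumpOrthogonal_clumpOfBases {V W : Fin k → Submodule ℂ (EuclideanSpace ℂ (Fin (r * k)))}
    (hVW : ∀ c, V c ⟂ W c) (b : ∀ c, OrthonormalBasis (Fin r) ℂ (V c))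
    (b' : ∀ c, OrthonormalBasis (Fin r) ℂ (W c)) :
    ClumpOrthogonal r k (clumpOfBases b) (clumpOfBases b') := fun i i' =>
  Finset.sum_eq_zero fun c _ => by
    simp only [clumpOfBases, cdot_ofLp]
    exact (hVW c).inner_eq (b c i).2 (b' c i').2

end Clump

namespace Matrix

variable {𝕜 n : Type*} [RCLike 𝕜] [Fintype n] [DecidableEq n]

lemma toEuclideanLin_mul (A B : Matrix n n 𝕜) :
    toEuclideanLin (A * B) = toEuclideanLin A * toEuclideanLin B := by
  simp only [← coe_toEuclideanCLM_eq_toEuclideanLin, map_mul, ContinuousLinearMap.toLinearMap_mul]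

lemma toEuclideanLin_one : toEuclideanLin (1 : Matrix n n 𝕜) = 1 := by
  simp only [← coe_toEuclideanCLM_eq_toEuclideanLin, map_one, ContinuousLinearMap.toLinearMap_one]

lemma isSymmetricProjection_toEuclideanLin {A : Matrix n n 𝕜} (hA : A.IsHermitian)
    (hAA : A * A = A) : (toEuclideanLin A).IsSymmetricProjection :=
  ⟨by rw [IsIdempotentElem, ← toEuclideanLin_mul, hAA], isSymmetric_toEuclideanLin_iff.mpr hA⟩

lemma finrank_range_toEuclideanLin (A : Matrix n n 𝕜) :
    Module.finrank 𝕜 (LinearMap.range (toEuclideanLin A)) = A.rank := by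
  rw [toEuclideanLin_eq_toLin_orthonormal, rank_eq_finrank_range_toLin A
    (EuclideanSpace.basisFun n 𝕜).toBasis (EuclideanSpace.basisFun n 𝕜).toBasis]

end Matrix

theorem IsRankRQuantumColoring.exists_isClumpRep {V : Type} {G : SimpleGraph V} {r k : ℕ}
    {E : V → Fin k → Matrix (Fin (r * k)) (Fin (r * k)) ℂ} (hE : IsRankRQuantumColoring G r k E) :
    ∃ ψ, IsClumpRep G r k ψ := by
  obtain ⟨⟨hherm, hidem, hsum, hadj⟩, hrank⟩ := hE
  set P := fun v c => Matrix.toEuclideanLin (E v c)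
  have hP v c : (P v c).IsSymmetricProjection :=
    Matrix.isSymmetricProjection_toEuclideanLin (hherm v c) (hidem v c)
  have hPsum v : ∑ c, P v c = 1 := by
    simp only [P, ← map_sum, hsum v, Matrix.toEuclideanLin_one]
  have hPrank v c : Module.finrank ℂ (LinearMap.range (P v c)) = r :=
    (Matrix.finrank_range_toEuclideanLin _).trans (hrank v c)
  let b v c := (stdOrthonormalBasis ℂ (LinearMap.range (P v c))).reindex (finCongr (hPrank v c))
  refine ⟨fun v => clumpOfBases (b v), fun v => isClump_clumpOfBases (fun c c' hne => ?_) (b v),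
    fun u v huv => clumpOrthogonal_clumpOfBases (fun c => ?_) (b u) (b v)⟩
  · exact (hP v c).isSymmetric.range_isOrtho_range_of_mul_eq_zero
      (LinearMap.pairwise_mul_eq_zero_of_sum_eq_one (hP v) (hPsum v) hne)
  · exact (hP u c).isSymmetric.range_isOrtho_range_of_mul_eq_zero
      (by simp only [P, ← Matrix.toEuclideanLin_mul, hadj u v huv c, map_zero])

lemma Fintype.card_subtype_snd_eq {α β : Type*} [Fintype α] [Fintype β] [DecidableEq β] (b : β) :
    Fintype.card {p : α × β // p.2 = b} = Fintype.card α := by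
  have hfiber : Finset.univ.filter (fun p : α × β => p.2 = b) = Finset.univ ×ˢ {b} := by
    ext ⟨x, y⟩
    simp [eq_comm]
  simp [Fintype.card_subtype, hfiber]

section FiberProjector

open Matrix

variable {R n ι : Type*} [DecidableEq n] [DecidableEq ι]

def fiberProjector [Zero R] [One R] (f : n → ι) (c : ι) : Matrix n n R :=
  diagonal fun x => if f x = c then 1 else 0

lemma isHermitian_fiberProjector [Semiring R] [StarRing R] (f : n → ι) (c : ι) :
    (fiberProjector f c : Matrix n n R).IsHermitian := by
  rw [IsHermitian, fiberProjector, diagonal_conjTranspose]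
  congr 1
  ext x
  by_cases h : f x = c <;> simp [h]

lemma sum_fiberProjector [Semiring R] [Fintype ι] (f : n → ι) :
    ∑ c, (fiberProjector f c : Matrix n n R) = 1 := by
  simp only [fiberProjector, ← diagonalAddMonoidHom_apply, ← map_sum, ← diagonal_one]
  congr 1
  ext x
  simp [Finset.sum_apply]

variable [Fintype n]

lemma fiberProjector_mul_self [Semiring R] (f : n → ι) (c : ι) :
    (fiberProjector f c * fiberProjector f c : Matrix n n R) = fiberProjector f c := by
  rw [fiberProjector, diagonal_mul_diagonal]
  congr 1
  ext x
  split_ifs <;> simp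

lemma fiberProjector_mul_eq_zero [Semiring R] {f g : n → ι} (hfg : ∀ x, f x ≠ g x) (c : ι) :
    (fiberProjector f c * fiberProjector g c : Matrix n n R) = 0 := by
  rw [fiberProjector, fiberProjector, diagonal_mul_diagonal, ← diagonal_zero]
  congr 1
  ext x
  by_cases h : f x = c
  · have : g x ≠ c := fun h' => hfg x (h.trans h'.symm)
    simp [h, this]
  · simp [h]

lemma rank_fiberProjector [Field R] (f : n → ι) (c : ι) :
    (fiberProjector f c : Matrix n n R).rank = Fintype.card {x // f x = c} := by
  classical
  rw [fiberProjector, rank_diagonal]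
  exact Fintype.card_congr (Equiv.subtypeEquivRight fun x => by split_ifs <;> simp [*])

end FiberProjector

theorem SimpleGraph.Colorable.exists_isRankRQuantumColoring {V : Type} {G : SimpleGraph V} {k : ℕ}
    [NeZero k] (hG : G.Colorable k) (r : ℕ) :
    ∃ E : V → Fin k → Matrix (Fin (r * k)) (Fin (r * k)) ℂ, IsRankRQuantumColoring G r k E := by
  obtain ⟨C⟩ := hG
  -- Vertex `v` measures the `Fin k` factor of `Fin r × Fin k ≃ Fin (r * k)` in the standard
  -- basis and relabels outcome `j` as `j - C v`: adjacent vertices never agree on a basis vector.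
  let f (v : V) (x : Fin (r * k)) : Fin k := (finProdFinEquiv.symm x).2 - C v
  refine ⟨fun v => fiberProjector (f v), ⟨fun v => isHermitian_fiberProjector (f v),
    fun v => fiberProjector_mul_self (f v), fun v => sum_fiberProjector (f v),
    fun u v huv => fiberProjector_mul_eq_zero fun x h => C.valid huv (sub_right_injective h)⟩,
    fun v c => ?_⟩
  calc (fiberProjector (f v) c).rank = Fintype.card {p : Fin r × Fin k // p.2 = c + C v} := by
        rw [rank_fiberProjector]
        exact Fintype.card_congr (finProdFinEquiv.symm.subtypeEquiv fun _ => sub_eq_iff_eq_add)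
    _ = r := by rw [Fintype.card_subtype_snd_eq, Fintype.card_fin]

theorem clumpRank_le_rankChromaticNumber_general {V : Type} [Fintype V]
    (G : SimpleGraph V) (r k : ℕ) :
    ((∃ E : V → Fin k → Matrix (Fin (r * k)) (Fin (r * k)) ℂ,
        IsRankRQuantumColoring G r k E) →
      ∃ ψ : V → Fin r → Fin k → Fin (r * k) → ℂ, IsClumpRep G r k ψ) ∧
    clumpRank G r ≤ rankChromaticNumber G r := by
  refine ⟨fun ⟨_, hE⟩ => hE.exists_isClumpRep, ?_⟩
  have hne : {k | 1 ≤ k ∧ ∃ E : V → Fin k → Matrix (Fin (r * k)) (Fin (r * k)) ℂ,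
      IsRankRQuantumColoring G r k E}.Nonempty :=
    ⟨Fintype.card V + 1, Nat.le_add_left 1 _,
      (G.colorable_of_fintype.mono (Nat.le_succ _)).exists_isRankRQuantumColoring r⟩
  obtain ⟨hk, _, hE⟩ := Nat.sInf_mem hne
  exact Nat.sInf_le ⟨hk, hE.exists_isClumpRep⟩

/-- a rank-`r` quantum `k`-colouring yields an `(r,k)`-clump
representation; in particular `ξ_c^{(r)}(G) ≤ χ_q^{(r)}(G)`. -/
theorem clumpRank_le_rankChromaticNumber {V : Type} [Fintype V]
    (G : SimpleGraph V) (r k : ℕ) (hr : 1 ≤ r) (hk : 1 ≤ k) :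
    ((∃ E : V → Fin k → Matrix (Fin (r * k)) (Fin (r * k)) ℂ,
        IsRankRQuantumColoring G r k E) →
      ∃ ψ : V → Fin r → Fin k → Fin (r * k) → ℂ, IsClumpRep G r k ψ) ∧
    clumpRank G r ≤ rankChromaticNumber G r :=
  clumpRank_le_rankChromaticNumber_general G r k
end

section
/- Let r, k ≥ 1, let ζ = e^{2πi/k} be a primitive k-th root of unity, and for j, c ∈ [k] let j ⊕ c denote the unique representative of j + c modulo k in [k]. Given an (r,k)-vector clump {ψ_{i,j}}_{i∈[r], j∈[k]} in ℂ^{rk}, define for i ∈ [r] and c₁, c₂ ∈ [k] the vector φ_{i,(c₁,c₂)} = k^{-1/2} Σ_{j=1}^k ζ^{c₁ j} e_j ⊗ ψ_{i, j⊕c₂} ∈ ℂ^k ⊗ ℂ^{rk} ≅ ℂ^{rk²}, where {e_j} is the standard basis of ℂ^k. Then: (a) ⟨φ_{i,(c₁,c₂)}, φ_{i',(c₁',c₂')}⟩ = δ_{i,i'} δ_{c₁,c₁'} δ_{c₂,c₂'}, so the rk² vectors φ_{i,(c₁,c₂)} form an orthonormal basis of ℂ^{rk²}; and (b) if {ψ'_{i,j}}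 is another (r,k)-clump orthogonal to {ψ_{i,j}}, and φ'_{i,(c₁,c₂)} are defined analogously from {ψ'_{i,j}}, then ⟨φ_{i,(c₁,c₂)}, φ'_{i',(c₁,c₂)}⟩ = 0 for all i, i' ∈ [r] and all c₁, c₂ ∈ [k]. -/
open scoped ComplexConjugate

/-!
Write `φ_{i,(c₁,c₂)} = Σ_j u_{c₁}(j) e_j ⊗ ψ_{i,j⊕c₂}` with `u_c(j) = k^{-1/2} ζ^{cj}`. Then
`⟨φ_{i,(c₁,c₂)}, φ'_{i',(c₁',c₂')}⟩ = Σ_j conj (u_{c₁}(j)) u_{c₁'}(j) ⟨ψ_{i,j⊕c₂}, ψ'_{i',j⊕c₂'}⟩`.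
For a single clump the inner products are `δ_{ii'} δ_{c₂c₂'}`, which leaves `⟨u_{c₁}, u_{c₁'}⟩`,
and the rows of the unitary DFT matrix are orthonormal; `r k²` orthonormal vectors in `ℂ^{r k²}`
form a basis. For two orthogonal clumps and `c₁ = c₁'` the weights `|u_{c₁}(j)|² = 1/k` do not
depend on `j`, so the sum is `k⁻¹ Σ_j ⟨ψ_{i,j}, ψ'_{i',j}⟩ = 0` after reindexing `j ↦ j ⊕ c₂`.
Only these two properties of `u` matter: any orthonormal basis of `ℂ^k` whose vectors have
entries of constant modulus would do.
-/

lemma IsPrimitiveRoot.sum_conj_pow_mul_pow {ζ : ℂ} {k : ℕ} (hζ : IsPrimitiveRoot ζ k)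
    (c c' : Fin k) :
    ∑ j : Fin k, conj (ζ ^ ((c : ℕ) * j)) * ζ ^ ((c' : ℕ) * j) = if c = c' then (k : ℂ) else 0 := by
  have hk : k ≠ 0 := c.pos.ne'
  have hζc : ζ ^ (c : ℕ) ≠ 0 := pow_ne_zero _ (hζ.ne_zero hk)
  set w := (ζ ^ (c : ℕ))⁻¹ * ζ ^ (c' : ℕ) with hw_def
  have hterm : ∀ j : ℕ, conj (ζ ^ ((c : ℕ) * j)) * ζ ^ ((c' : ℕ) * j) = w ^ j := fun j => by
    rw [← Complex.inv_eq_conj (by rw [norm_pow, hζ.norm'_eq_one hk, one_pow]),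
      mul_pow, inv_pow, pow_mul, pow_mul]
  simp_rw [hterm]
  rw [Fin.sum_univ_eq_sum_range (w ^ ·)]
  split_ifs with h
  · simp [hw_def, h, inv_mul_cancel₀ (h ▸ hζc)]
  · have hw : w ≠ 1 := fun hw => h <| Fin.ext <|
      hζ.pow_inj c.2 c'.2 ((inv_mul_eq_one₀ hζc).1 hw)
    have hwk : w ^ k = 1 := by
      rw [hw_def, mul_pow, inv_pow, pow_right_comm, pow_right_comm ζ (c' : ℕ), hζ.pow_eq_one,
        one_pow, one_pow, inv_one, one_mul]
    rw [geom_sum_eq hw, hwk, sub_self, zero_div]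

noncomputable def fourierVec (k : ℕ) (ζ : ℂ) (c : Fin k) : Fin k → ℂ :=
  fun j => ((Real.sqrt k)⁻¹ : ℂ) * ζ ^ ((c : ℕ) * (j : ℕ))

lemma conj_sqrt_inv_mul_self (k : ℕ) :
    conj ((Real.sqrt k)⁻¹ : ℂ) * ((Real.sqrt k)⁻¹ : ℂ) = (k : ℂ)⁻¹ := by
  rw [map_inv₀, Complex.conj_ofReal, ← mul_inv, ← Complex.ofReal_mul,
    Real.mul_self_sqrt k.cast_nonneg, Complex.ofReal_natCast]

lemma cdot_fourierVec {ζ : ℂ} {k : ℕ} (hζ : IsPrimitiveRoot ζ k) (c c' : Fin k) :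
    cdot (fourierVec k ζ c) (fourierVec k ζ c') = if c = c' then 1 else 0 := by
  have hk : (k : ℂ) ≠ 0 := Nat.cast_ne_zero.2 c.pos.ne'
  calc cdot (fourierVec k ζ c) (fourierVec k ζ c')
      = (k : ℂ)⁻¹ * ∑ j : Fin k, conj (ζ ^ ((c : ℕ) * j)) * ζ ^ ((c' : ℕ) * j) := by
        simp only [cdot, fourierVec, map_mul, Finset.mul_sum, ← conj_sqrt_inv_mul_self k]
        exact Finset.sum_congr rfl fun j _ => by ring
    _ = if c = c' then 1 else 0 := by
        rw [hζ.sum_conj_pow_mul_pow, mul_ite, inv_mul_cancel₀ hk, mul_zero]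

lemma conj_fourierVec_mul_self {ζ : ℂ} {k : ℕ} (hζ : IsPrimitiveRoot ζ k) (c j : Fin k) :
    conj (fourierVec k ζ c j) * fourierVec k ζ c j = (k : ℂ)⁻¹ := by
  have hk : k ≠ 0 := c.pos.ne'
  rw [fourierVec, map_mul, mul_mul_mul_comm, conj_sqrt_inv_mul_self, Complex.conj_mul',
    norm_pow, hζ.norm'_eq_one hk]
  simp

lemma linearIndependent_of_cdot_eq_ite {ι α : Type} [Fintype α] [DecidableEq ι] {v : ι → α → ℂ}
    (hv : ∀ p q, cdot (v p) (v q) = if p = q then 1 else 0) : LinearIndependent ℂ v := by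
  have hon : Orthonormal ℂ fun p => WithLp.toLp 2 (v p) := by
    rw [orthonormal_iff_ite]
    intro p q
    simpa only [PiLp.inner_apply, RCLike.inner_apply', cdot] using hv p q
  exact hon.linearIndependent.of_comp (WithLp.linearEquiv 2 ℂ (α → ℂ)).symm.toLinearMap

section ClumpTwist

variable {r k : ℕ} (u : Fin k → Fin k → ℂ)

def clumpTwist (ψ : Fin r → Fin k → Fin (r * k) → ℂ) (i : Fin r) (c₁ c₂ : Fin k) :
    Fin k × Fin (r * k) → ℂ :=
  fun p => u c₁ p.1 * ψ i (p.1 + c₂) p.2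

lemma cdot_clumpTwist (ψ ψ' : Fin r → Fin k → Fin (r * k) → ℂ) (i i' : Fin r)
    (c₁ c₂ c₁' c₂' : Fin k) :
    cdot (clumpTwist u ψ i c₁ c₂) (clumpTwist u ψ' i' c₁' c₂') =
      ∑ j, conj (u c₁ j) * u c₁' j * cdot (ψ i (j + c₂)) (ψ' i' (j + c₂')) := by
  simp only [cdot, clumpTwist, Fintype.sum_prod_type, Finset.mul_sum, map_mul]
  exact Finset.sum_congr rfl fun j _ => Finset.sum_congr rfl fun x _ => by ring

lemma IsClump.cdot_clumpTwist {ψ : Fin r → Fin k → Fin (r * k) → ℂ} (hψ : IsClump r k ψ)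
    (hu : ∀ c c', cdot (u c) (u c') = if c = c' then 1 else 0) (i i' : Fin r)
    (c₁ c₂ c₁' c₂' : Fin k) :
    cdot (clumpTwist u ψ i c₁ c₂) (clumpTwist u ψ i' c₁' c₂') =
      if i = i' ∧ c₁ = c₁' ∧ c₂ = c₂' then 1 else 0 := by
  rw [_root_.cdot_clumpTwist]
  by_cases h : i = i' ∧ c₂ = c₂'
  · obtain ⟨rfl, rfl⟩ := h
    have hone : ∀ j, cdot (ψ i (j + c₂)) (ψ i (j + c₂)) = 1 := fun j => by simp [hψ _ _ _ _]
    simp only [hone, mul_one]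
    exact (hu c₁ c₁').trans (by simp)
  · have hzero : ∀ j, cdot (ψ i (j + c₂)) (ψ i' (j + c₂')) = 0 := fun j => by
      rw [hψ, if_neg (fun h' => h ⟨h'.1, add_left_cancel h'.2⟩)]
    simp only [hzero, mul_zero, Finset.sum_const_zero]
    rw [if_neg (fun h' => h ⟨h'.1, h'.2.2⟩)]

lemma ClumpOrthogonal.cdot_clumpTwist {ψ ψ' : Fin r → Fin k → Fin (r * k) → ℂ}
    (horth : ClumpOrthogonal r k ψ ψ') {c₁ : Fin k} {s : ℂ}
    (hu : ∀ j, conj (u c₁ j) * u c₁ j = s) (i i' : Fin r) (c₂ : Fin k) :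
    cdot (clumpTwist u ψ i c₁ c₂) (clumpTwist u ψ' i' c₁ c₂) = 0 := by
  have : NeZero k := ⟨c₂.pos.ne'⟩
  rw [_root_.cdot_clumpTwist]
  simp only [hu, ← Finset.mul_sum]
  rw [Fintype.sum_equiv (Equiv.addRight c₂) (fun j => cdot (ψ i (j + c₂)) (ψ' i' (j + c₂)))
    (fun j => cdot (ψ i j) (ψ' i' j)) fun _ => rfl, horth, mul_zero]

end ClumpTwist

theorem clump_fourier_orthonormal_general (r k : ℕ) (hk : 1 ≤ k)
    (ζ : ℂ) (hζ : ζ = Complex.exp (2 * (Real.pi : ℂ) * Complex.I / (k : ℂ)))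
    (ψ ψ' : Fin r → Fin k → Fin (r * k) → ℂ)
    (hψ : IsClump r k ψ)
    (horth : ClumpOrthogonal r k ψ ψ')
    (φ φ' : Fin r → Fin k → Fin k → (Fin k × Fin (r * k)) → ℂ)
    (hφ : ∀ i c₁ c₂ j x, φ i c₁ c₂ (j, x) =
      ((Real.sqrt k)⁻¹ : ℂ) * ζ ^ ((c₁ : ℕ) * (j : ℕ)) * ψ i (j + c₂) x)
    (hφ' : ∀ i c₁ c₂ j x, φ' i c₁ c₂ (j, x) =
      ((Real.sqrt k)⁻¹ : ℂ) * ζ ^ ((c₁ : ℕ) * (j : ℕ)) * ψ' i (j + c₂) x) :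
    (∀ i i' c₁ c₂ c₁' c₂', cdot (φ i c₁ c₂) (φ i' c₁' c₂') =
      if i = i' ∧ c₁ = c₁' ∧ c₂ = c₂' then (1 : ℂ) else 0) ∧
    LinearIndependent ℂ (fun p : Fin r × Fin k × Fin k => φ p.1 p.2.1 p.2.2) ∧
    Submodule.span ℂ (Set.range (fun p : Fin r × Fin k × Fin k => φ p.1 p.2.1 p.2.2)) = ⊤ ∧
    (∀ i i' c₁ c₂, cdot (φ i c₁ c₂) (φ' i' c₁ c₂) = 0) := by
  have hprim : IsPrimitiveRoot ζ k := hζ ▸ Complex.isPrimitiveRoot_exp k (by omega)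
  obtain rfl : φ = clumpTwist (fourierVec k ζ) ψ := by
    funext i c₁ c₂ ⟨j, x⟩
    exact hφ i c₁ c₂ j x
  obtain rfl : φ' = clumpTwist (fourierVec k ζ) ψ' := by
    funext i c₁ c₂ ⟨j, x⟩
    exact hφ' i c₁ c₂ j x
  have horthonormal := hψ.cdot_clumpTwist _ (cdot_fourierVec hprim)
  have hli : LinearIndependent ℂ fun p : Fin r × Fin k × Fin k =>
      clumpTwist (fourierVec k ζ) ψ p.1 p.2.1 p.2.2 :=
    linearIndependent_of_cdot_eq_ite fun p q => by simp [horthonormal, Prod.ext_iff]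
  refine ⟨horthonormal, hli, hli.span_eq_top_of_card_eq_finrank' ?_, fun i i' c₁ c₂ =>
    horth.cdot_clumpTwist _ (conj_fourierVec_mul_self hprim c₁) i i' c₂⟩
  simp only [Fintype.card_prod, Fintype.card_fin, Module.finrank_fintype_fun_eq_card]
  ring

/-- the Fourier-twisted vectors built from an `(r,k)`-clump form an
orthonormal basis of `ℂ^(r*k²)`, and the constructions associated to two
orthogonal clumps are orthogonal colour-block-wise. Here indices `j, c ∈ Fin k`
run over the residues modulo `k` and `j ⊕ c` is addition in `Fin k`. -/
theorem clump_fourier_orthonormal (r k : ℕ) (hr : 1 ≤ r) (hk : 1 ≤ k)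
    (ζ : ℂ) (hζ : ζ = Complex.exp (2 * (Real.pi : ℂ) * Complex.I / (k : ℂ)))
    (ψ ψ' : Fin r → Fin k → Fin (r * k) → ℂ)
    (hψ : IsClump r k ψ) (hψ' : IsClump r k ψ')
    (horth : ClumpOrthogonal r k ψ ψ')
    (φ φ' : Fin r → Fin k → Fin k → (Fin k × Fin (r * k)) → ℂ)
    (hφ : ∀ i c₁ c₂ j x, φ i c₁ c₂ (j, x) =
      ((Real.sqrt k)⁻¹ : ℂ) * ζ ^ ((c₁ : ℕ) * (j : ℕ)) * ψ i (j + c₂) x)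
    (hφ' : ∀ i c₁ c₂ j x, φ' i c₁ c₂ (j, x) =
      ((Real.sqrt k)⁻¹ : ℂ) * ζ ^ ((c₁ : ℕ) * (j : ℕ)) * ψ' i (j + c₂) x) :
    (∀ i i' c₁ c₂ c₁' c₂', cdot (φ i c₁ c₂) (φ i' c₁' c₂') =
      if i = i' ∧ c₁ = c₁' ∧ c₂ = c₂' then (1 : ℂ) else 0) ∧
    LinearIndependent ℂ (fun p : Fin r × Fin k × Fin k => φ p.1 p.2.1 p.2.2) ∧
    Submodule.span ℂ (Set.range (fun p : Fin r × Fin k × Fin k => φ p.1 p.2.1 p.2.2)) = ⊤ ∧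
    (∀ i i' c₁ c₂, cdot (φ i c₁ c₂) (φ' i' c₁ c₂) = 0) :=
  clump_fourier_orthonormal_general r k hk ζ hζ ψ ψ' hψ horth φ φ' hφ hφ'
end

section
/- Let k ≥ 3 and let G be a finite simple graph containing distinct vertices v₁,…,v_{k+1} such that (v_i, v_j) ∈ E(G) for every i ∈ [k−1] and every j ∈ {k, k+1}. Then G admits a k-dimensional orthogonal representation if and only if at least one of the following graphs does: (1) provided v_k and v_{k+1} are non-adjacent in G, the graph obtained from G by identifying v_k and v_{k+1}; (2) for each pair of distinct non-adjacent vertices u, w ∈ {v₁,…,v_{k−1}}, the graph obtained from G by identifying u and w; (3) for each subset S ⊆ {v₁,…,v_{k−1}} with |S| ≥ 3 such that no vertex of S is adjacent to all the other vertices of S, the graph obtained from G by performing set identification with respect to S. -/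
open scoped ComplexConjugate

/-- Identifying vertex `u` with vertex `v`: delete `u`, and add an edge `(v, w)` for
every `w ∉ {u, v}` that was adjacent to `u` in `G`. -/
def identify {V : Type} (G : SimpleGraph V) (u v : V) :
    SimpleGraph {w : V // w ≠ u} :=
  SimpleGraph.fromRel fun a b =>
    G.Adj ↑a ↑b ∨ ((a : V) = v ∧ G.Adj u ↑b) ∨ ((b : V) = v ∧ G.Adj u ↑a)

/-- Set identification of `G` with respect to `S`: for `u ∈ S` and `v ∉ S`, the edge
`(u, v)` is added whenever `v` is adjacent in `G` to every `w ∈ S \ {u}`. -/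
def setIdentify {V : Type} (G : SimpleGraph V) (S : Set V) : SimpleGraph V :=
  SimpleGraph.fromRel fun a b =>
    G.Adj a b ∨ (a ∈ S ∧ b ∉ S ∧ ∀ w ∈ S, w ≠ a → G.Adj b w)

/-! If `ψ` represents `G`, either the vectors at `v_k, v_{k+1}` are parallel, and `ψ` descends to
the graph identifying them, or they span a plane. In the latter case the `k - 1` vectors at
`v_1, …, v_{k-1}` lie in the `(k-2)`-dimensional orthogonal complement of that plane, so they are
linearly dependent, and on the support `T` of a dependency each vector lies in the span of the
others. If `|T| = 2` two of them are parallel and `ψ` descends to their identification; if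
`|T| ≥ 3` a vector orthogonal to all vectors of `T` but one is orthogonal to that one as well, so
`ψ` still represents the set identification, and no vertex of `T` is adjacent to all the others
(its vector would be orthogonal to itself). Conversely, `G` maps homomorphically to each of the
three graphs, so their representations pull back. -/

open Module Submodule Finset
open scoped InnerProductSpace

section LinearAlgebra

theorem exists_finset_forall_mem_span_erase {K M ι : Type*} [DivisionRing K] [AddCommGroup M]
    [Module K M] [DecidableEq ι] {f : ι → M} (hf : ¬ LinearIndependent K f)
    (hf₀ : ∀ i, f i ≠ 0) :
    ∃ T : Finset ι, 2 ≤ #T ∧ ∀ i ∈ T, f i ∈ span K (f '' ↑(T.erase i)) := by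
  classical
  obtain ⟨s, g, hsum, i₀, hi₀s, hi₀⟩ := not_linearIndependent_iff.mp hf
  set T := s.filter (g · ≠ 0)
  have hTsum : ∑ i ∈ T, g i • f i = 0 := by
    rw [← hsum]
    exact Finset.sum_filter_of_ne fun i _ hi hgi => hi (by rw [hgi, zero_smul])
  have hspan : ∀ i ∈ T, f i ∈ span K (f '' ↑(T.erase i)) := by
    intro i hi
    have hgi : g i ≠ 0 := (Finset.mem_filter.mp hi).2
    have hrel : g i • f i = -∑ j ∈ T.erase i, g j • f j :=
      eq_neg_of_add_eq_zero_left ((Finset.add_sum_erase T (fun j => g j • f j) hi).trans hTsum)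
    refine (smul_mem_iff _ hgi).mp ?_
    rw [hrel]
    exact neg_mem (sum_mem fun j hj => smul_mem _ _ (subset_span ⟨j, hj, rfl⟩))
  refine ⟨T, ?_, hspan⟩
  have hi₀T : i₀ ∈ T := Finset.mem_filter.mpr ⟨hi₀s, hi₀⟩
  by_contra! hT
  have hT₀ : T.erase i₀ = ∅ := by
    rw [← Finset.card_eq_zero, Finset.card_erase_of_mem hi₀T]
    omega
  exact hf₀ i₀ (by simpa [hT₀] using hspan i₀ hi₀T)

variable {𝕜 E : Type*} [RCLike 𝕜] [NormedAddCommGroup E] [InnerProductSpace 𝕜 E]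

theorem inner_eq_zero_of_mem_span {s : Set E} {x z : E} (hx : x ∈ span 𝕜 s)
    (hs : ∀ y ∈ s, ⟪y, z⟫_𝕜 = 0) : ⟪x, z⟫_𝕜 = 0 :=
  (isOrtho_span.mpr fun y hy _ hw => (Set.mem_singleton_iff.mp hw) ▸ hs y hy).inner_eq hx
    (mem_span_singleton_self z)

theorem LinearIndependent.card_add_finrank_le_of_mem_orthogonal [FiniteDimensional 𝕜 E]
    {ι : Type*} [Fintype ι] {f : ι → E} (hf : LinearIndependent 𝕜 f) (K : Submodule 𝕜 E)
    (hK : ∀ i, f i ∈ Kᗮ) : Fintype.card ι + finrank 𝕜 K ≤ finrank 𝕜 E := by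
  have hle : Fintype.card ι ≤ finrank 𝕜 Kᗮ := by
    rw [← finrank_span_eq_card hf]
    exact finrank_mono (span_le.mpr (Set.range_subset_iff.mpr hK))
  have := K.finrank_add_finrank_orthogonal
  omega

end LinearAlgebra

def IsOrthRepIn (𝕜 : Type*) {V E : Type*} [RCLike 𝕜] [NormedAddCommGroup E]
    [InnerProductSpace 𝕜 E] (G : SimpleGraph V) (φ : V → E) : Prop :=
  (∀ v, ‖φ v‖ = 1) ∧ ∀ u v, G.Adj u v → ⟪φ u, φ v⟫_𝕜 = 0

theorem cdot_eq_inner {k : ℕ} (x y : Fin k → ℂ) :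
    cdot x y = ⟪WithLp.toLp 2 x, WithLp.toLp 2 y⟫_ℂ := by
  simp only [cdot, PiLp.inner_apply, RCLike.inner_apply, mul_comm]

theorem isOrthRep_iff_isOrthRepIn {V : Type} {G : SimpleGraph V} {k : ℕ} {ψ : V → Fin k → ℂ} :
    IsOrthRep G k ψ ↔ IsOrthRepIn ℂ G fun v => WithLp.toLp 2 (ψ v) := by
  have hnorm (x : EuclideanSpace ℂ (Fin k)) : ⟪x, x⟫_ℂ = 1 ↔ ‖x‖ = 1 := by
    rw [inner_self_eq_norm_sq_to_K, ← RCLike.ofReal_pow, ← RCLike.ofReal_one, RCLike.ofReal_inj,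
      pow_eq_one_iff_of_nonneg (norm_nonneg x) two_ne_zero]
  simp only [IsOrthRep, IsOrthRepIn, cdot_eq_inner, hnorm]

theorem exists_isOrthRep_iff {V : Type} {G : SimpleGraph V} {k : ℕ} :
    (∃ ψ : V → Fin k → ℂ, IsOrthRep G k ψ) ↔
      ∃ φ : V → EuclideanSpace ℂ (Fin k), IsOrthRepIn ℂ G φ :=
  ⟨fun ⟨_, h⟩ => ⟨_, isOrthRep_iff_isOrthRepIn.mp h⟩,
    fun ⟨φ, h⟩ => ⟨fun v => (φ v).ofLp, isOrthRep_iff_isOrthRepIn.mpr h⟩⟩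

theorem SimpleGraph.le_setIdentify {V : Type} (G : SimpleGraph V) (S : Set V) :
    G ≤ setIdentify G S :=
  fun _ _ h => (SimpleGraph.fromRel_adj _ _ _).mpr ⟨h.ne, Or.inl (Or.inl h)⟩

def SimpleGraph.identifyHom {V : Type} [DecidableEq V] (G : SimpleGraph V) {u w : V}
    (hwu : w ≠ u) (hnadj : ¬ G.Adj u w) : G →g identify G u w where
  toFun x := if hx : x = u then ⟨w, hwu⟩ else ⟨x, hx⟩
  map_rel' {x y} hxy := by
    simp only [identify, SimpleGraph.fromRel_adj]
    split_ifs with hx hy hy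
    · exact absurd (hx.trans hy.symm) hxy.ne
    · subst hx
      exact ⟨fun h => hnadj (Subtype.mk.inj h ▸ hxy), Or.inl (Or.inr (Or.inl ⟨rfl, hxy⟩))⟩
    · subst hy
      exact ⟨fun h => hnadj (Subtype.mk.inj h ▸ hxy.symm), Or.inl (Or.inr (Or.inr ⟨rfl, hxy.symm⟩))⟩
    · exact ⟨fun h => hxy.ne (congrArg Subtype.val h), Or.inl (Or.inl hxy)⟩

namespace IsOrthRepIn

variable {𝕜 E : Type*} [RCLike 𝕜] [NormedAddCommGroup E] [InnerProductSpace 𝕜 E] {V : Type}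
  {G : SimpleGraph V} {φ : V → E}

theorem ne_zero (h : IsOrthRepIn 𝕜 G φ) (v : V) : φ v ≠ 0 := by
  intro hv
  simpa [hv] using h.1 v

theorem comp {W : Type*} {H : SimpleGraph W} {φ : W → E} (h : IsOrthRepIn 𝕜 H φ) (f : G →g H) :
    IsOrthRepIn 𝕜 G (φ ∘ f) :=
  ⟨fun v => h.1 (f v), fun _ _ hxy => h.2 _ _ (f.map_adj hxy)⟩

theorem of_fromRel {r : V → V → Prop} (hφ : ∀ v, ‖φ v‖ = 1)
    (hr : ∀ a b, r a b → ⟪φ a, φ b⟫_𝕜 = 0) : IsOrthRepIn 𝕜 (SimpleGraph.fromRel r) φ := by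
  refine ⟨hφ, fun a b hab => ?_⟩
  rcases ((SimpleGraph.fromRel_adj _ _ _).mp hab).2 with h | h
  · exact hr a b h
  · exact inner_eq_zero_symm.mp (hr b a h)

theorem not_adj_of_smul_eq (h : IsOrthRepIn 𝕜 G φ) {u w : V} {c : 𝕜} (hc : c • φ u = φ w) :
    ¬ G.Adj u w := by
  intro huw
  have h₀ := h.2 u w huw
  rw [← hc, inner_smul_right, inner_self_eq_norm_sq_to_K, h.1 u] at h₀
  have hc₀ : c = 0 := by simpa using h₀
  exact h.ne_zero w (by rw [← hc, hc₀, zero_smul])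

theorem identify_of_smul_eq (h : IsOrthRepIn 𝕜 G φ) {u w : V} {c : 𝕜} (hc : c • φ u = φ w) :
    IsOrthRepIn 𝕜 (identify G u w) fun x => φ x := by
  refine of_fromRel (fun x => h.1 x) ?_
  rintro a b (hab | ⟨ha, hub⟩ | ⟨hb, hua⟩)
  · exact h.2 _ _ hab
  · rw [ha, ← hc, inner_smul_left, h.2 _ _ hub, mul_zero]
  · rw [hb, ← hc, inner_smul_right, h.2 _ _ hua.symm, mul_zero]

variable {ι : Type*} [DecidableEq ι] {u : ι → V} {T : Finset ι}

theorem inner_eq_zero_of_forall_adj (h : IsOrthRepIn 𝕜 G φ) {i : ι} {x : V}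
    (hi : φ (u i) ∈ span 𝕜 ((φ ∘ u) '' ↑(T.erase i))) (hx : ∀ j ∈ T.erase i, G.Adj (u j) x) :
    ⟪φ (u i), φ x⟫_𝕜 = 0 :=
  inner_eq_zero_of_mem_span hi (by
    rintro _ ⟨j, hj, rfl⟩
    exact h.2 _ _ (hx j hj))

theorem not_exists_forall_adj (h : IsOrthRepIn 𝕜 G φ)
    (hT : ∀ i ∈ T, φ (u i) ∈ span 𝕜 ((φ ∘ u) '' ↑(T.erase i))) :
    ¬ ∃ i ∈ T, ∀ j ∈ T, j ≠ i → G.Adj (u i) (u j) := by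
  rintro ⟨i, hi, hadj⟩
  have h₀ := h.inner_eq_zero_of_forall_adj (hT i hi) fun j hj =>
    (hadj j (Finset.mem_of_mem_erase hj) (Finset.ne_of_mem_erase hj)).symm
  rw [inner_self_eq_norm_sq_to_K, h.1] at h₀
  simp at h₀

theorem setIdentify_image [DecidableEq V] (h : IsOrthRepIn 𝕜 G φ) (hu : Function.Injective u)
    (hT : ∀ i ∈ T, φ (u i) ∈ span 𝕜 ((φ ∘ u) '' ↑(T.erase i))) :
    IsOrthRepIn 𝕜 (setIdentify G ↑(T.image u)) φ := by
  refine of_fromRel h.1 ?_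
  rintro a b (hab | ⟨ha, -, hb⟩)
  · exact h.2 _ _ hab
  · obtain ⟨i, hi, rfl⟩ := Finset.mem_image.mp ha
    refine h.inner_eq_zero_of_forall_adj (hT i hi) fun j hj => (hb _ ?_ ?_).symm
    · exact Finset.mem_image_of_mem u (Finset.mem_of_mem_erase hj)
    · exact hu.ne (Finset.ne_of_mem_erase hj)

theorem identify_or_setIdentify [FiniteDimensional 𝕜 E] [Fintype ι] [DecidableEq V]
    (h : IsOrthRepIn 𝕜 G φ) {a b : V} (hab : LinearIndependent 𝕜 ![φ a, φ b])
    (hu : Function.Injective u) (hua : ∀ i, G.Adj (u i) a) (hub : ∀ i, G.Adj (u i) b)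
    (hcard : finrank 𝕜 E < Fintype.card ι + 2) :
    (∃ i j, i ≠ j ∧ ¬ G.Adj (u i) (u j) ∧ IsOrthRepIn 𝕜 (identify G (u i) (u j)) fun x => φ x) ∨
      ∃ T : Finset ι, 3 ≤ #T ∧ (¬ ∃ i ∈ T, ∀ j ∈ T, j ≠ i → G.Adj (u i) (u j)) ∧
        IsOrthRepIn 𝕜 (setIdentify G ↑(T.image u)) φ := by
  have hdep : ¬ LinearIndependent 𝕜 (φ ∘ u) := by
    intro hli
    have hperp : ∀ i, (φ ∘ u) i ∈ (span 𝕜 (Set.range ![φ a, φ b]))ᗮ := fun i =>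
      ((span 𝕜 _).mem_orthogonal _).mpr fun x hx => inner_eq_zero_of_mem_span hx (by
        simp only [Set.forall_mem_range, Fin.forall_fin_two]
        exact ⟨h.2 _ _ (hua i).symm, h.2 _ _ (hub i).symm⟩)
    have := hli.card_add_finrank_le_of_mem_orthogonal _ hperp
    rw [finrank_span_eq_card hab, Fintype.card_fin] at this
    omega
  obtain ⟨T, hT2, hT⟩ := exists_finset_forall_mem_span_erase hdep fun i => h.ne_zero (u i)
  rcases hT2.eq_or_lt with hT2 | hT3
  · obtain ⟨i, j, hij, rfl⟩ := Finset.card_eq_two.mp hT2.symm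
    have hj : φ (u j) ∈ 𝕜 ∙ φ (u i) := by
      simpa [Finset.erase_insert_of_ne hij] using hT j (by simp)
    obtain ⟨c, hc⟩ := mem_span_singleton.mp hj
    exact Or.inl ⟨i, j, hij, h.not_adj_of_smul_eq hc, h.identify_of_smul_eq hc⟩
  · exact Or.inr ⟨T, hT3, h.not_exists_forall_adj hT, h.setIdentify_image hu hT⟩

end IsOrthRepIn

/-- Here `v 0, …, v ⟨k-2⟩` play the role of `v₁, …, v_{k-1}` and `v ⟨k-1⟩, v ⟨k⟩` play the role
of `v_k, v_{k+1}`. -/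
theorem orth_rep_iff_branching {V : Type} [DecidableEq V]
    (G : SimpleGraph V) (k : ℕ) (hk : 3 ≤ k)
    (v : Fin (k + 1) → V) (hinj : Function.Injective v)
    (hadj : ∀ i j : Fin (k + 1), (i : ℕ) < k - 1 → k - 1 ≤ (j : ℕ) →
      G.Adj (v i) (v j)) :
    (∃ ψ : V → Fin k → ℂ, IsOrthRep G k ψ) ↔
      ((¬ G.Adj (v ⟨k - 1, by omega⟩) (v ⟨k, by omega⟩) ∧
        ∃ ψ : {w : V // w ≠ v ⟨k, by omega⟩} → Fin k → ℂ, IsOrthRep (identify G (v ⟨k, by omega⟩) (v ⟨k - 1, by omega⟩)) k ψ) ∨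
      (∃ i i' : Fin (k + 1), (i : ℕ) < k - 1 ∧ (i' : ℕ) < k - 1 ∧ i ≠ i' ∧
        ¬ G.Adj (v i) (v i') ∧
        ∃ ψ, IsOrthRep (identify G (v i) (v i')) k ψ) ∨
      (∃ S : Finset (Fin (k + 1)), (∀ i ∈ S, (i : ℕ) < k - 1) ∧ 3 ≤ S.card ∧
        (¬ ∃ i ∈ S, ∀ j ∈ S, j ≠ i → G.Adj (v i) (v j)) ∧
        ∃ ψ, IsOrthRep (setIdentify G ((S.image v : Finset V) : Set V)) k ψ)) := by
  simp only [exists_isOrthRep_iff]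
  set a := v ⟨k - 1, by omega⟩
  set b := v ⟨k, by omega⟩
  have hle : k - 1 ≤ k + 1 := by omega
  set lower : Fin (k - 1) → Fin (k + 1) := Fin.castLE hle
  constructor
  · rintro ⟨φ, hφ⟩
    by_cases hab : LinearIndependent ℂ ![φ a, φ b]
    · right
      rcases hφ.identify_or_setIdentify hab (hinj.comp (Fin.castLE_injective hle))
          (fun i => hadj _ _ i.2 le_rfl) (fun i => hadj _ _ i.2 (by simp))
          (by rw [finrank_euclideanSpace_fin, Fintype.card_fin]; omega) with
        ⟨i, j, hij, hnadj, hrep⟩ | ⟨T, hT, hdom, hrep⟩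
      · exact Or.inl ⟨lower i, lower j, i.2, j.2, (Fin.castLE_injective hle).ne hij, hnadj, _, hrep⟩
      · refine Or.inr ⟨T.image lower, by simp [lower], ?_, by simpa [lower] using hdom, φ, ?_⟩
        · rwa [Finset.card_image_of_injective _ (Fin.castLE_injective hle)]
        · rwa [Finset.image_image]
    · left
      obtain ⟨c, hc⟩ : ∃ c : ℂ, c • φ b = φ a := by
        simpa [linearIndependent_fin2, hφ.ne_zero] using hab
      exact ⟨fun h => hφ.not_adj_of_smul_eq hc h.symm, _, hφ.identify_of_smul_eq hc⟩
  · rintro (⟨hnadj, φ, hφ⟩ | ⟨i, i', -, -, hii', hnadj, φ, hφ⟩ | ⟨S, -, -, -, φ, hφ⟩)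
    · have hba : a ≠ b := hinj.ne (Fin.ne_of_val_ne (show k - 1 ≠ k by omega))
      exact ⟨_, hφ.comp (G.identifyHom hba fun h => hnadj h.symm)⟩
    · exact ⟨_, hφ.comp (G.identifyHom (hinj.ne hii'.symm) hnadj)⟩
    · exact ⟨φ, hφ.comp (SimpleGraph.Hom.ofLE (G.le_setIdentify _))⟩
end

section
/- Let G be a finite simple graph with a k-dimensional orthogonal representation {ψ_w}_{w∈V(G)}, and let S ⊆ V(G) be a set of vertices for which there exist complex scalars λ_w, w ∈ S, all nonzero, with Σ_{w∈S} λ_w ψ_w = 0. Then {ψ_w}_{w∈V(G)} is also a valid k-dimensional orthogonal representation of the graph G' obtained from G by performing set identification with respect to S; in particular, G' admits a k-dimensional orthogonal representation. -/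
open scoped ComplexConjugate

/-! Pairing the dependence `∑ w ∈ S, λ w • ψ w = 0` with `ψ v`, where `ψ v` is orthogonal to
every `ψ w` with `w ∈ S \ {u}`, leaves `λ u * ⟪ψ v, ψ u⟫ = 0`; since `λ u ≠ 0`, the new edge
`(u, v)` is represented by orthogonal vectors. -/

section cdot

variable {ι : Type} [Fintype ι]

lemma cdot_eq_star_dotProduct (x y : ι → ℂ) : cdot x y = star x ⬝ᵥ y := rfl

lemma cdot_swap (x y : ι → ℂ) : cdot y x = conj (cdot x y) := by
  rw [cdot_eq_star_dotProduct, cdot_eq_star_dotProduct, starRingEnd_apply (star x ⬝ᵥ y),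
    ← Matrix.star_dotProduct_star, star_star]

lemma cdot_eq_zero_comm {x y : ι → ℂ} (h : cdot x y = 0) : cdot y x = 0 := by
  rw [cdot_swap, h, map_zero]

lemma cdot_sum_smul_right {α : Type} (x : ι → ℂ) (s : Finset α) (l : α → ℂ)
    (f : α → ι → ℂ) : cdot x (∑ a ∈ s, l a • f a) = ∑ a ∈ s, l a * cdot x (f a) := by
  simp only [cdot_eq_star_dotProduct, dotProduct_sum, dotProduct_smul, smul_eq_mul]

lemma cdot_eq_zero_of_sum_smul_eq_zero {α : Type} {x : ι → ℂ} {s : Finset α} {l : α → ℂ}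
    {f : α → ι → ℂ} (hsum : ∑ w ∈ s, l w • f w = 0) {a : α} (ha : a ∈ s) (hla : l a ≠ 0)
    (horth : ∀ w ∈ s, w ≠ a → cdot x (f w) = 0) : cdot x (f a) = 0 := by
  have hzero : ∑ w ∈ s, l w * cdot x (f w) = 0 := by
    rw [← cdot_sum_smul_right, hsum, cdot_eq_star_dotProduct, dotProduct_zero]
  rw [Finset.sum_eq_single_of_mem a ha fun w hw hwa => by rw [horth w hw hwa, mul_zero]]
    at hzero
  exact (mul_eq_zero.1 hzero).resolve_left hla

end cdot

theorem orth_rep_setIdentify_general {V : Type}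
    (G : SimpleGraph V) (k : ℕ) (ψ : V → Fin k → ℂ) (hψ : IsOrthRep G k ψ)
    (S : Finset V) (l : V → ℂ) (hl : ∀ w ∈ S, l w ≠ 0)
    (hsum : ∑ w ∈ S, l w • ψ w = 0) :
    IsOrthRep (setIdentify G (S : Set V)) k ψ := by
  have horth_added : ∀ a b, a ∈ S → (∀ w ∈ S, w ≠ a → G.Adj b w) → cdot (ψ b) (ψ a) = 0 :=
    fun a b ha hadj => cdot_eq_zero_of_sum_smul_eq_zero hsum ha (hl a ha)
      fun w hw hwa => hψ.2 b w (hadj w hw hwa)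
  refine ⟨hψ.1, fun u v huv => ?_⟩
  rw [setIdentify, SimpleGraph.fromRel_adj] at huv
  obtain ⟨-, (hGuv | ⟨hu, -, hadj⟩) | (hGvu | ⟨hv, -, hadj⟩)⟩ := huv
  · exact hψ.2 u v hGuv
  · exact cdot_eq_zero_comm (horth_added u v hu hadj)
  · exact cdot_eq_zero_comm (hψ.2 v u hGvu)
  · exact horth_added v u hv hadj

/-- if the vectors assigned to a set `S` of vertices satisfy a linear
dependence with all coefficients nonzero, then the same assignment is a valid
`k`-dimensional orthogonal representation of the set identification of `G` with
respect to `S`; in particular, that graph admits a `k`-dimensional orthogonal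
representation. -/
theorem orth_rep_setIdentify {V : Type} [Fintype V]
    (G : SimpleGraph V) (k : ℕ) (ψ : V → Fin k → ℂ) (hψ : IsOrthRep G k ψ)
    (S : Finset V) (l : V → ℂ) (hl : ∀ w ∈ S, l w ≠ 0)
    (hsum : ∑ w ∈ S, l w • ψ w = 0) :
    IsOrthRep (setIdentify G (S : Set V)) k ψ :=
  orth_rep_setIdentify_general G k ψ hψ S l hl hsum
end

section
/- Let G be a finite simple graph on n ≥ 1 vertices, identified with [n], and suppose G admits a k-dimensional orthogonal representation. Then there exists a real symmetric positive semidefinite (n+1)×(n+1) matrix M (rows and columns indexed by {1,…,n+1}) such that: all entries of M are nonnegative; M_{1,1} = k; M_{1,i+1} = M_{i+1,i+1} = 1 for all i ∈ [n]; Σ_{i∈S} M_{i+1,j+1} ≤ 1 for every clique S of G and every j ∈ [n]; and M_{1,1} + Σ_{i∈S, j∈T} M_{i+1,j+1} ≥ |S| + |T| for all cliques S, T of G. In particular, the optimal value ξ_SDP(G) of the semidefinite program minimizing M_{1,1} over such matrices satisfies ξ_SDP(G) ≤ ξ(G). -/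
open scoped ComplexConjugate

/-- Feasibility for the semidefinite program defining `ξ_SDP(G)`, for a graph on
vertex set `[n] = Fin n`; row/column `0` of `M` is the distinguished index. -/
def FeasibleSDP {n : ℕ} (G : SimpleGraph (Fin n))
    (M : Matrix (Fin (n + 1)) (Fin (n + 1)) ℝ) : Prop :=
  M.IsSymm ∧ M.PosSemidef ∧
  (∀ i j, 0 ≤ M i j) ∧
  (∀ i : Fin n, M 0 i.succ = 1 ∧ M i.succ i.succ = 1) ∧
  (∀ S : Finset (Fin n), G.IsClique (S : Set (Fin n)) →
    ∀ j : Fin n, ∑ i ∈ S, M i.succ j.succ ≤ 1) ∧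
  ∀ S T : Finset (Fin n), G.IsClique (S : Set (Fin n)) → G.IsClique (T : Set (Fin n)) →
    (S.card + T.card : ℝ) ≤ M 0 0 + ∑ i ∈ S, ∑ j ∈ T, M i.succ j.succ

/-- `ξ_SDP(G)`: the optimal value of the semidefinite program minimizing `M 0 0`
over feasible matrices. -/
noncomputable def xiSDP {n : ℕ} (G : SimpleGraph (Fin n)) : ℝ :=
  sInf {x : ℝ | ∃ M, FeasibleSDP G M ∧ M 0 0 = x}

/-!
Send vertex `i` to the rank-one projector `Pᵢ = ψᵢ ψᵢᴴ` and the extra index to the identity, and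
let `M` be the Gram matrix of these Hermitian matrices for `⟨A, B⟩ = re tr (A B)`. Then
`M₀₀ = tr 1 = k`, `M₀ᵢ = Mᵢᵢ = tr Pᵢ = 1`, and all entries are nonnegative because the trace of a
product of two orthogonal projectors is `‖P Q‖²_F ≥ 0`. For a clique `S` the projectors `Pᵢ`,
`i ∈ S`, are mutually orthogonal, so `P_S = ∑_{i ∈ S} Pᵢ` is again a projector, of trace `|S|`;
the two clique constraints are `tr ((1 - P_S) Pⱼ) ≥ 0` and `tr ((1 - P_S) (1 - P_T)) ≥ 0`.
-/

open Matrix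
open scoped ComplexOrder

theorem IsStarProjection.finset_sum {ι R : Type*} [NonUnitalSemiring R] [StarRing R]
    {P : ι → R} {s : Finset ι} (hP : ∀ i ∈ s, IsStarProjection (P i))
    (horth : ∀ i ∈ s, ∀ j ∈ s, i ≠ j → P i * P j = 0) :
    IsStarProjection (∑ i ∈ s, P i) := by
  classical
  induction s using Finset.induction_on with
  | empty => simp
  | insert a s has ih =>
    rw [Finset.sum_insert has]
    refine (hP a (s.mem_insert_self a)).add
      (ih (fun i hi => hP i (Finset.mem_insert_of_mem hi))
        fun i hi j hj => horth i (Finset.mem_insert_of_mem hi) j (Finset.mem_insert_of_mem hj))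
      ?_
    rw [Finset.mul_sum]
    exact Finset.sum_eq_zero fun i hi => horth a (s.mem_insert_self a) i
      (Finset.mem_insert_of_mem hi) (ne_of_mem_of_not_mem hi has).symm

namespace Matrix

variable {m R : Type*} [Fintype m]

theorem trace_mul_nonneg_of_isStarProjection [CommRing R] [PartialOrder R] [StarRing R]
    [StarOrderedRing R] {P Q : Matrix m m R} (hP : IsStarProjection P)
    (hQ : IsStarProjection Q) : 0 ≤ (P * Q).trace := by
  have hPQ : (P * Q).trace = (P * Q * (P * Q)ᴴ).trace := by
    have hPh : Pᴴ = P := hP.isSelfAdjoint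
    have hQh : Qᴴ = Q := hQ.isSelfAdjoint
    rw [conjTranspose_mul, hPh, hQh]
    calc (P * Q).trace = (P * P * (Q * Q)).trace := by
          rw [hP.isIdempotentElem.eq, hQ.isIdempotentElem.eq]
      _ = (P * Q * (Q * P)).trace := by
          rw [Matrix.mul_assoc, trace_mul_comm]
          simp only [Matrix.mul_assoc]
  rw [hPQ]
  exact (posSemidef_self_mul_conjTranspose _).trace_nonneg

theorem re_trace_mul_nonneg_of_isStarProjection {P Q : Matrix m m ℂ} (hP : IsStarProjection P)
    (hQ : IsStarProjection Q) : 0 ≤ ((P * Q).trace).re :=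
  (Complex.nonneg_iff.mp (trace_mul_nonneg_of_isStarProjection hP hQ)).1

theorem isStarProjection_vecMulVec_star [CommSemiring R] [StarRing R] {u : m → R}
    (hu : star u ⬝ᵥ u = 1) : IsStarProjection (vecMulVec u (star u)) where
  isIdempotentElem := by
    rw [IsIdempotentElem, vecMulVec_mul_vecMulVec, hu, one_smul]
  isSelfAdjoint := by
    rw [IsSelfAdjoint, star_eq_conjTranspose, conjTranspose_vecMulVec, star_star]

theorem vecMulVec_star_mul_vecMulVec_star_eq_zero [CommSemiring R] [StarRing R] {u v : m → R}
    (huv : star u ⬝ᵥ v = 0) : vecMulVec u (star u) * vecMulVec v (star v) = 0 := by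
  rw [vecMulVec_mul_vecMulVec, huv, zero_smul, vecMulVec_zero]

end Matrix

section TraceGram

variable {ι m : Type*} [Fintype m]

noncomputable def traceGram (A : ι → Matrix m m ℂ) : Matrix ι ι ℝ :=
  of fun i j => ((A i * A j).trace).re

theorem traceGram_apply (A : ι → Matrix m m ℂ) (i j : ι) :
    traceGram A i j = ((A i * A j).trace).re := rfl

theorem traceGram_isSymm (A : ι → Matrix m m ℂ) : (traceGram A).IsSymm :=
  IsSymm.ext fun i j => by rw [traceGram_apply, traceGram_apply, trace_mul_comm]

theorem posSemidef_traceGram [Fintype ι] {A : ι → Matrix m m ℂ}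
    (hA : ∀ i, (A i).IsHermitian) : (traceGram A).PosSemidef := by
  refine .of_dotProduct_mulVec_nonneg (traceGram_isSymm A) fun x => ?_
  set B : Matrix m m ℂ := ∑ i, (x i : ℂ) • A i
  have hB : Bᴴ = B := by
    simp only [B, conjTranspose_sum, conjTranspose_smul, (hA _).eq, Complex.star_def,
      Complex.conj_ofReal]
  have hBB : (B * B).trace = ∑ i, ∑ j, ((x i * x j : ℝ) : ℂ) * (A i * A j).trace := by
    simp only [B, Finset.sum_mul_sum, trace_sum, smul_mul_smul_comm, trace_smul, smul_eq_mul]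
    push_cast
    rfl
  have hquad : star x ⬝ᵥ (traceGram A *ᵥ x) = ((B * Bᴴ).trace).re := by
    rw [hB, hBB]
    simp only [dotProduct, mulVec, star_trivial, Finset.mul_sum, Complex.re_sum,
      Complex.re_ofReal_mul, traceGram_apply]
    exact Finset.sum_congr rfl fun i _ => Finset.sum_congr rfl fun j _ => by ring
  rw [hquad]
  exact (Complex.nonneg_iff.mp (posSemidef_self_mul_conjTranspose B).trace_nonneg).1

theorem traceGram_nonneg {A : ι → Matrix m m ℂ} (hA : ∀ i, IsStarProjection (A i))
    (i j : ι) : 0 ≤ traceGram A i j :=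
  re_trace_mul_nonneg_of_isStarProjection (hA i) (hA j)

end TraceGram

namespace IsOrthRep

variable {V : Type} {G : SimpleGraph V} {k : ℕ} {ψ : V → Fin k → ℂ}

theorem cons_zero (hψ : IsOrthRep G k ψ) : IsOrthRep G (k + 1) fun v => Fin.cons 0 (ψ v) := by
  have hcdot (x y : Fin k → ℂ) : cdot (Fin.cons 0 x) (Fin.cons 0 y) = cdot x y := by
    simp [cdot, Fin.sum_univ_succ]
  exact ⟨fun v => (hcdot _ _).trans (hψ.1 v), fun u v huv => (hcdot _ _).trans (hψ.2 u v huv)⟩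

theorem exists_isOrthRep_orthRank (hψ : IsOrthRep G k ψ) :
    ∃ φ : V → Fin (orthRank G) → ℂ, IsOrthRep G (orthRank G) φ :=
  (Nat.sInf_mem (⟨k + 1, k.succ_pos, _, hψ.cons_zero⟩ :
    {m | 1 ≤ m ∧ ∃ φ : V → Fin m → ℂ, IsOrthRep G m φ}.Nonempty)).2

theorem isStarProjection (hψ : IsOrthRep G k ψ) (v : V) :
    IsStarProjection (vecMulVec (ψ v) (star (ψ v))) :=
  isStarProjection_vecMulVec_star (hψ.1 v)

theorem isStarProjection_sum (hψ : IsOrthRep G k ψ) {S : Finset V}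
    (hS : G.IsClique (S : Set V)) :
    IsStarProjection (∑ v ∈ S, vecMulVec (ψ v) (star (ψ v))) :=
  IsStarProjection.finset_sum (fun v _ => hψ.isStarProjection v) fun u hu v hv huv =>
    vecMulVec_star_mul_vecMulVec_star_eq_zero (hψ.2 u v (hS hu hv huv))

theorem trace_vecMulVec_star (hψ : IsOrthRep G k ψ) (v : V) :
    (vecMulVec (ψ v) (star (ψ v))).trace = 1 := by
  rw [trace_vecMulVec, dotProduct_comm]
  exact hψ.1 v

theorem trace_sum (hψ : IsOrthRep G k ψ) (S : Finset V) :
    (∑ v ∈ S, vecMulVec (ψ v) (star (ψ v))).trace = S.card := by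
  simp [Matrix.trace_sum, hψ.trace_vecMulVec_star]

end IsOrthRep

section SDPMatrix

variable {n k : ℕ}

noncomputable def orthRepSDPMatrix (ψ : Fin n → Fin k → ℂ) :
    Matrix (Fin (n + 1)) (Fin (n + 1)) ℝ :=
  traceGram (Fin.cons 1 fun i => vecMulVec (ψ i) (star (ψ i)))

theorem orthRepSDPMatrix_zero_zero (ψ : Fin n → Fin k → ℂ) :
    orthRepSDPMatrix ψ 0 0 = k := by
  simp [orthRepSDPMatrix, traceGram_apply]

theorem sum_sum_orthRepSDPMatrix_succ_succ (ψ : Fin n → Fin k → ℂ) (S T : Finset (Fin n)) :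
    ∑ i ∈ S, ∑ j ∈ T, orthRepSDPMatrix ψ i.succ j.succ
      = (((∑ i ∈ S, vecMulVec (ψ i) (star (ψ i))) *
          ∑ j ∈ T, vecMulVec (ψ j) (star (ψ j))).trace).re := by
  simp [orthRepSDPMatrix, traceGram_apply, Finset.sum_mul_sum, Matrix.trace_sum]

theorem IsOrthRep.feasibleSDP {G : SimpleGraph (Fin n)} {ψ : Fin n → Fin k → ℂ}
    (hψ : IsOrthRep G k ψ) : FeasibleSDP G (orthRepSDPMatrix ψ) := by
  set P : Fin n → Matrix (Fin k) (Fin k) ℂ := fun i => vecMulVec (ψ i) (star (ψ i))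
  have hproj : ∀ i, IsStarProjection ((Fin.cons 1 P : Fin (n + 1) → _) i) :=
    Fin.cases (IsStarProjection.one _) hψ.isStarProjection
  refine ⟨traceGram_isSymm _, posSemidef_traceGram fun i => (hproj i).isSelfAdjoint,
    traceGram_nonneg hproj, fun i => ⟨?_, ?_⟩, fun S hS j => ?_, fun S T hS hT => ?_⟩
  · simp [orthRepSDPMatrix, traceGram_apply, hψ.trace_vecMulVec_star]
  · simp [orthRepSDPMatrix, traceGram_apply, (hψ.isStarProjection i).isIdempotentElem.eq,
      hψ.trace_vecMulVec_star]
  · have h := re_trace_mul_nonneg_of_isStarProjection (hψ.isStarProjection_sum hS).one_sub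
      (hψ.isStarProjection j)
    rw [sub_mul, one_mul, trace_sub, Complex.sub_re, hψ.trace_vecMulVec_star] at h
    have hsum := sum_sum_orthRepSDPMatrix_succ_succ ψ S {j}
    simp only [Finset.sum_singleton] at hsum
    rw [hsum]
    simpa using h
  · have h := re_trace_mul_nonneg_of_isStarProjection (hψ.isStarProjection_sum hS).one_sub
      (hψ.isStarProjection_sum hT).one_sub
    rw [sub_mul, one_mul, mul_sub, mul_one, trace_sub, trace_sub, trace_sub, trace_one,
      hψ.trace_sum, hψ.trace_sum] at h
    rw [orthRepSDPMatrix_zero_zero, sum_sum_orthRepSDPMatrix_succ_succ]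
    simp only [Complex.sub_re, Complex.natCast_re, Fintype.card_fin] at h
    linarith

end SDPMatrix

theorem xiSDP_le_of_feasibleSDP {n : ℕ} {G : SimpleGraph (Fin n)}
    {M : Matrix (Fin (n + 1)) (Fin (n + 1)) ℝ} (hM : FeasibleSDP G M) : xiSDP G ≤ M 0 0 :=
  csInf_le ⟨0, by rintro _ ⟨M', hM', rfl⟩; exact hM'.2.2.1 0 0⟩ ⟨M, hM, rfl⟩

theorem xiSDP_le_orthRank_general {n : ℕ} (G : SimpleGraph (Fin n))
    (k : ℕ) (ψ : Fin n → Fin k → ℂ) (hψ : IsOrthRep G k ψ) :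
    (∃ M : Matrix (Fin (n + 1)) (Fin (n + 1)) ℝ,
      FeasibleSDP G M ∧ M 0 0 = (k : ℝ)) ∧
    xiSDP G ≤ (orthRank G : ℝ) := by
  refine ⟨⟨orthRepSDPMatrix ψ, hψ.feasibleSDP, orthRepSDPMatrix_zero_zero ψ⟩, ?_⟩
  obtain ⟨φ, hφ⟩ := hψ.exists_isOrthRep_orthRank
  simpa only [orthRepSDPMatrix_zero_zero] using xiSDP_le_of_feasibleSDP hφ.feasibleSDP

/-- a `k`-dimensional orthogonal representation of a graph on
`n ≥ 1` vertices yields a feasible SDP solution with value exactly `k`; in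
particular `ξ_SDP(G) ≤ ξ(G)`. -/
theorem xiSDP_le_orthRank {n : ℕ} (hn : 1 ≤ n) (G : SimpleGraph (Fin n))
    (k : ℕ) (ψ : Fin n → Fin k → ℂ) (hψ : IsOrthRep G k ψ) :
    (∃ M : Matrix (Fin (n + 1)) (Fin (n + 1)) ℝ,
      FeasibleSDP G M ∧ M 0 0 = (k : ℝ)) ∧
    xiSDP G ≤ (orthRank G : ℝ) :=
  xiSDP_le_orthRank_general G k ψ hψ
end

section
/- Let G be a finite simple graph on n ≥ 1 vertices, identified with [n], and let M be a real symmetric (n+1)×(n+1) matrix with all entries nonnegative such that M_{1,i+1} = M_{i+1,i+1} = 1 for all i ∈ [n], Σ_{i∈S} M_{i+1,j+1} ≤ 1 for every clique S of G and every j ∈ [n], and M_{1,1} + Σ_{i∈S, j∈T} M_{i+1,j+1} ≥ |S| + |T| for all cliques S, T of G. Then M_{1,1} ≥ ω(G). In particular ω(G) ≤ ξ_SDP(G), where ξ_SDP(G) is the optimal value of the semidefinite program minimizing M_{1,1} over such positive semidefinite matrices M. -/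
open scoped ComplexConjugate

/-! Taking `S = T` a maximum clique in the second family of constraints and bounding the double
sum column by column with the first gives `2ω ≤ M₀₀ + ω`. The program is feasible (the Gram matrix
of the all-ones vector and the standard basis of `ℝⁿ` is a feasible point with `M₀₀ = n`), so
`ξ_SDP` is the infimum of a nonempty set of reals bounded below by `ω`. -/

open Finset
open scoped Matrix

lemma card_le_of_sum_le_one_of_card_add_card_le {V : Type*} (S : Finset V) (A : V → V → ℝ)
    (c : ℝ) (hcol : ∀ j ∈ S, ∑ i ∈ S, A i j ≤ 1)
    (hpair : (#S + #S : ℝ) ≤ c + ∑ i ∈ S, ∑ j ∈ S, A i j) :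
    (#S : ℝ) ≤ c := by
  have hsum : ∑ i ∈ S, ∑ j ∈ S, A i j ≤ #S := by
    rw [sum_comm]
    simpa using sum_le_sum hcol
  linarith

theorem cliqueNum_le_of_clique_sums_le {V : Type*} [Finite V] (G : SimpleGraph V)
    (A : V → V → ℝ) (c : ℝ)
    (hcol : ∀ S : Finset V, G.IsClique (S : Set V) → ∀ j, ∑ i ∈ S, A i j ≤ 1)
    (hpair : ∀ S T : Finset V, G.IsClique (S : Set V) → G.IsClique (T : Set V) →
      (#S + #T : ℝ) ≤ c + ∑ i ∈ S, ∑ j ∈ T, A i j) :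
    (G.cliqueNum : ℝ) ≤ c := by
  obtain ⟨S, hS⟩ := G.exists_isNClique_cliqueNum
  rw [← hS.card_eq]
  exact card_le_of_sum_le_one_of_card_add_card_le S A c (fun j _ ↦ hcol S hS.isClique j)
    (hpair S S hS.isClique hS.isClique)

def onesStdBasisFrame (n : ℕ) : Matrix (Fin n) (Fin (n + 1)) ℝ :=
  Matrix.of fun i ↦ Fin.cons 1 (Pi.single i 1)

def onesStdBasisGram (n : ℕ) : Matrix (Fin (n + 1)) (Fin (n + 1)) ℝ :=
  (onesStdBasisFrame n)ᵀ * onesStdBasisFrame n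

section onesStdBasisGram

variable (n : ℕ)

lemma onesStdBasisGram_zero_zero : onesStdBasisGram n 0 0 = n := by
  simp [onesStdBasisGram, Matrix.mul_apply, onesStdBasisFrame]

lemma onesStdBasisGram_zero_succ (j : Fin n) : onesStdBasisGram n 0 j.succ = 1 := by
  simp [onesStdBasisGram, Matrix.mul_apply, onesStdBasisFrame, Pi.single_apply]

lemma onesStdBasisGram_succ_succ (i j : Fin n) :
    onesStdBasisGram n i.succ j.succ = if i = j then 1 else 0 := by
  simp [onesStdBasisGram, Matrix.mul_apply, onesStdBasisFrame, Pi.single_apply]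

lemma onesStdBasisFrame_nonneg (i : Fin n) (j : Fin (n + 1)) : 0 ≤ onesStdBasisFrame n i j := by
  cases j using Fin.cases with
  | zero => simp [onesStdBasisFrame]
  | succ j => simpa [onesStdBasisFrame, Pi.single_apply] using ite_nonneg zero_le_one le_rfl

lemma onesStdBasisGram_nonneg (i j : Fin (n + 1)) : 0 ≤ onesStdBasisGram n i j := by
  rw [onesStdBasisGram, Matrix.mul_apply]
  exact sum_nonneg fun k _ ↦
    mul_nonneg (onesStdBasisFrame_nonneg n k i) (onesStdBasisFrame_nonneg n k j)

lemma onesStdBasisGram_posSemidef : (onesStdBasisGram n).PosSemidef := by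
  simpa [onesStdBasisGram] using Matrix.posSemidef_conjTranspose_mul_self (onesStdBasisFrame n)

end onesStdBasisGram

lemma onesStdBasisGram_feasibleSDP {n : ℕ} (G : SimpleGraph (Fin n)) :
    FeasibleSDP G (onesStdBasisGram n) := by
  refine ⟨(onesStdBasisGram_posSemidef n).isHermitian, onesStdBasisGram_posSemidef n,
    onesStdBasisGram_nonneg n, fun i ↦ ⟨onesStdBasisGram_zero_succ n i, by
      simp [onesStdBasisGram_succ_succ]⟩,
    fun S _ j ↦ ?_, fun S T _ _ ↦ ?_⟩
  · simp only [onesStdBasisGram_succ_succ, sum_ite_eq']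
    split_ifs <;> norm_num
  · have hinter : ∑ i ∈ S, ∑ j ∈ T, onesStdBasisGram n i.succ j.succ = #(S ∩ T) := by
      simp [onesStdBasisGram_succ_succ, sum_ite_mem]
    have hunion : #(S ∪ T) ≤ n := (card_le_univ _).trans_eq (Fintype.card_fin n)
    rw [onesStdBasisGram_zero_zero, hinter]
    exact_mod_cast (card_union_add_card_inter S T).symm.le.trans (by omega)

theorem cliqueNum_le_xiSDP_general {n : ℕ} (G : SimpleGraph (Fin n))
    (M : Matrix (Fin (n + 1)) (Fin (n + 1)) ℝ)
    (hclique1 : ∀ S : Finset (Fin n), G.IsClique (S : Set (Fin n)) →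
      ∀ j : Fin n, ∑ i ∈ S, M i.succ j.succ ≤ 1)
    (hclique2 : ∀ S T : Finset (Fin n), G.IsClique (S : Set (Fin n)) →
      G.IsClique (T : Set (Fin n)) →
      (S.card + T.card : ℝ) ≤ M 0 0 + ∑ i ∈ S, ∑ j ∈ T, M i.succ j.succ) :
    (cliqueNum' G : ℝ) ≤ M 0 0 ∧ (cliqueNum' G : ℝ) ≤ xiSDP G := by
  refine ⟨cliqueNum_le_of_clique_sums_le G (fun i j ↦ M i.succ j.succ) _ hclique1 hclique2,
    le_csInf ⟨_, _, onesStdBasisGram_feasibleSDP G, rfl⟩ ?_⟩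
  rintro _ ⟨N, ⟨-, -, -, -, hN1, hN2⟩, rfl⟩
  exact cliqueNum_le_of_clique_sums_le G (fun i j ↦ N i.succ j.succ) _ hN1 hN2

/-- any symmetric entrywise-nonnegative matrix satisfying the linear
constraints of the SDP has `M 0 0 ≥ ω(G)`; in particular `ω(G) ≤ ξ_SDP(G)`. -/
theorem cliqueNum_le_xiSDP {n : ℕ} (hn : 1 ≤ n) (G : SimpleGraph (Fin n))
    (M : Matrix (Fin (n + 1)) (Fin (n + 1)) ℝ)
    (hsymm : M.IsSymm)
    (hnonneg : ∀ i j, 0 ≤ M i j)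
    (hone : ∀ i : Fin n, M 0 i.succ = 1 ∧ M i.succ i.succ = 1)
    (hclique1 : ∀ S : Finset (Fin n), G.IsClique (S : Set (Fin n)) →
      ∀ j : Fin n, ∑ i ∈ S, M i.succ j.succ ≤ 1)
    (hclique2 : ∀ S T : Finset (Fin n), G.IsClique (S : Set (Fin n)) →
      G.IsClique (T : Set (Fin n)) →
      (S.card + T.card : ℝ) ≤ M 0 0 + ∑ i ∈ S, ∑ j ∈ T, M i.succ j.succ) :
    (cliqueNum' G : ℝ) ≤ M 0 0 ∧ (cliqueNum' G : ℝ) ≤ xiSDP G :=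
  cliqueNum_le_xiSDP_general G M hclique1 hclique2
end
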